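/- arXiv:2402.18637 — 6 statements merged into one kernel-verified Lean document; each statement's English description precedes it below -/
import Mathlib

section
/- Let X be a set, C₊ := ℝ≥0 × X, and fix A ∈ ℂ, ν : C₊ → ℂ and f : X → ℂ. For every component family ψ = (ψₘ) with each ψₘ symmetric, every n ∈ ℕ and every p : Fin n → C₊, the BMS-particle pairing satisfies Fₙ[T_f ψ](p) = (Σ_{i=1}^{n} ω(p_i) f(x̂(p_i))) · Fₙ[ψ](p). (This is the computational core of the paper's Theorem 'Improper eigenstates of supermomentum': the BMS n-particle states are improper eigenstates of the null memory operator with eigenvalue Σᵢ ωᵢ f(p̂ᵢ), with tensor indices suppressed.) -/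
open scoped BigOperators

noncomputable section

/-- The space `C₊ = ℝ≥0 × X` of null momenta: a frequency `ω ∈ ℝ≥0` and an
angular direction in `X`. -/
abbrev Cplus (X : Type*) := NNReal × X

/-- A component family is symmetric if each component `ψₘ` is invariant under
precomposition with permutations of `Fin m`. -/
def IsSymmFamily {X : Type*} (ψ : ∀ m : ℕ, (Fin m → Cplus X) → ℂ) : Prop :=
  ∀ (m : ℕ) (σ : Equiv.Perm (Fin m)) (p : Fin m → Cplus X), ψ m (p ∘ σ) = ψ m p

/-- The BMS-particle pairing
`Fₙ[ψ](p) = A · Σ_{m=0}^{n} (16π)^m √(n!/m!) (1/(n−m)!) (1/n!)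
  Σ_{σ ∈ Perm(Fin n)} (Π_{i=1}^{m} ω(p_{σ(i)})) ψₘ(p_{σ(1)},…,p_{σ(m)})
  Π_{i=m+1}^{n} ν(p_{σ(i)})`. -/
def pairing {X : Type*} (A : ℂ) (ν : Cplus X → ℂ)
    (ψ : ∀ m : ℕ, (Fin m → Cplus X) → ℂ) (n : ℕ) (p : Fin n → Cplus X) : ℂ :=
  A * ∑ m : Fin (n + 1),
    (((16 * Real.pi) ^ (m : ℕ) * Real.sqrt ((n.factorial : ℝ) / ((m : ℕ).factorial : ℝ))
        / ((n - (m : ℕ)).factorial : ℝ) / (n.factorial : ℝ) : ℝ) : ℂ) *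
      ∑ σ : Equiv.Perm (Fin n),
        (∏ i : Fin n,
          (if (i : ℕ) < (m : ℕ) then (((p (σ i)).1 : ℝ) : ℂ) else ν (p (σ i)))) *
        ψ (m : ℕ) (fun i : Fin (m : ℕ) => p (σ (Fin.castLE (Nat.lt_succ_iff.mp m.isLt) i)))

/-- The action of the null-memory operator `T_f` on component families:
`(T_f ψ)₀ = 0` and for `m ≥ 1`,
`(T_f ψ)ₘ(p₁,…,pₘ) = (Σᵢ ω(pᵢ) f(x̂(pᵢ))) ψₘ(p₁,…,pₘ)
  + (√m/(16π)) (1/m!) Σ_{σ ∈ Perm(Fin m)} ψ_{m−1}(p_{σ(1)},…,p_{σ(m−1)})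
      f(x̂(p_{σ(m)})) ν(p_{σ(m)})`. -/
def nullMemOp {X : Type*} (f : X → ℂ) (ν : Cplus X → ℂ)
    (ψ : ∀ m : ℕ, (Fin m → Cplus X) → ℂ) : ∀ m : ℕ, (Fin m → Cplus X) → ℂ
  | 0 => fun _ => 0
  | (k + 1) => fun p =>
      (∑ i : Fin (k + 1), (((p i).1 : ℝ) : ℂ) * f (p i).2) * ψ (k + 1) p +
      ((Real.sqrt ((k : ℝ) + 1) / (16 * Real.pi) / ((k + 1).factorial : ℝ) : ℝ) : ℂ) *
        ∑ σ : Equiv.Perm (Fin (k + 1)),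
          ψ k (fun i : Fin k => p (σ i.castSucc)) *
            f (p (σ (Fin.last k))).2 * ν (p (σ (Fin.last k)))

namespace BMSEigenAux

open Finset

variable {X : Type*}

def phi (f : X → ℂ) (q : Cplus X) : ℂ := ((q.1 : ℝ) : ℂ) * f q.2

def W (ν : Cplus X → ℂ) {n : ℕ} (p : Fin n → Cplus X) (m : ℕ) (σ : Equiv.Perm (Fin n)) : ℂ :=
  ∏ i : Fin n, (if (i : ℕ) < m then (((p (σ i)).1 : ℝ) : ℂ) else ν (p (σ i)))

def creal (n m : ℕ) : ℝ :=
  (16 * Real.pi) ^ m * Real.sqrt ((n.factorial : ℝ) / (m.factorial : ℝ))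
    / ((n - m).factorial : ℝ) / (n.factorial : ℝ)

def Coef (n m : ℕ) : ℂ := ((creal n m : ℝ) : ℂ)

def Term (ν : Cplus X → ℂ) {n : ℕ} (p : Fin n → Cplus X)
    (Φ : ∀ m : ℕ, (Fin m → Cplus X) → ℂ) (m : ℕ) (hm : m ≤ n) : ℂ :=
  Coef n m * ∑ σ : Equiv.Perm (Fin n), W ν p m σ * Φ m (fun i => p (σ (Fin.castLE hm i)))

def Dp (f : X → ℂ) (ν : Cplus X → ℂ) {n : ℕ} (p : Fin n → Cplus X)
    (ψ : ∀ m : ℕ, (Fin m → Cplus X) → ℂ) (m : ℕ) (hm : m ≤ n) : ℂ :=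
  Coef n m * ∑ σ : Equiv.Perm (Fin n),
    W ν p m σ * (∑ i : Fin n, if (i : ℕ) < m then 0 else phi f (p (σ i))) *
      ψ m (fun i => p (σ (Fin.castLE hm i)))

lemma pairing_eq (A : ℂ) (ν : Cplus X → ℂ) (ψ : ∀ m : ℕ, (Fin m → Cplus X) → ℂ)
    (n : ℕ) (p : Fin n → Cplus X) :
    pairing A ν ψ n p
      = A * ∑ m : Fin (n + 1), Term ν p ψ (m : ℕ) (Nat.lt_succ_iff.mp m.isLt) := rfl

lemma sum_mul_perm {n : ℕ} (ρ : Equiv.Perm (Fin n)) (F : Equiv.Perm (Fin n) → ℂ) :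
    ∑ σ : Equiv.Perm (Fin n), F (σ * ρ) = ∑ σ : Equiv.Perm (Fin n), F σ := by
  simpa using Equiv.sum_comp (Equiv.mulRight ρ) F

lemma W_mul_perm (ν : Cplus X → ℂ) {n : ℕ} (p : Fin n → Cplus X) (m : ℕ)
    (ρ σ : Equiv.Perm (Fin n))
    (hρ : ∀ j : Fin n, ((ρ j : ℕ) < m ↔ (j : ℕ) < m)) :
    W ν p m (σ * ρ) = W ν p m σ := by
  unfold W
  have h1 : ∀ i : Fin n,
      (if (i : ℕ) < m then (((p ((σ * ρ) i)).1 : ℝ) : ℂ) else ν (p ((σ * ρ) i)))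
        = (fun j : Fin n => if (j : ℕ) < m then (((p (σ j)).1 : ℝ) : ℂ) else ν (p (σ j))) (ρ i) := by
    intro i
    simp only [Equiv.Perm.mul_apply]
    exact if_congr (hρ i).symm rfl rfl
  calc (∏ i : Fin n, if (i : ℕ) < m then (((p ((σ * ρ) i)).1 : ℝ) : ℂ) else ν (p ((σ * ρ) i)))
      = ∏ i : Fin n,
          (fun j : Fin n => if (j : ℕ) < m then (((p (σ j)).1 : ℝ) : ℂ) else ν (p (σ j))) (ρ i) :=
        Finset.prod_congr rfl (fun i _ => h1 i)
    _ = ∏ i : Fin n,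
          (fun j : Fin n => if (j : ℕ) < m then (((p (σ j)).1 : ℝ) : ℂ) else ν (p (σ j))) i :=
        Equiv.prod_comp ρ (fun j : Fin n => if (j : ℕ) < m then (((p (σ j)).1 : ℝ) : ℂ) else ν (p (σ j)))

lemma sum_castLE {n m : ℕ} (h : m ≤ n) (g : Fin n → ℂ) :
    ∑ i : Fin m, g (Fin.castLE h i) = ∑ i : Fin n, if (i : ℕ) < m then g i else 0 := by
  classical
  have hL : ∑ i : Fin m, g (Fin.castLE h i)
      = ∑ j ∈ Finset.range m,
          (if hj : j < n then (if j < m then g ⟨j, hj⟩ else 0) else 0) := by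
    rw [← Fin.sum_univ_eq_sum_range]
    refine Finset.sum_congr rfl fun i _ => ?_
    rw [dif_pos (lt_of_lt_of_le i.isLt h), if_pos i.isLt]
    rfl
  have hR : (∑ i : Fin n, if (i : ℕ) < m then g i else 0)
      = ∑ j ∈ Finset.range n,
          (if hj : j < n then (if j < m then g ⟨j, hj⟩ else 0) else 0) := by
    rw [← Fin.sum_univ_eq_sum_range]
    exact Finset.sum_congr rfl fun i _ => by rw [dif_pos i.isLt]
  rw [hL, hR]
  refine Finset.sum_subset (Finset.range_subset_range.mpr h) fun x hx hxm => ?_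
  rw [Finset.mem_range] at hxm
  simp [hxm]

lemma sum_ite_const {n : ℕ} (k : ℕ) (h : k ≤ n) (V : ℂ) :
    (∑ i : Fin n, if (i : ℕ) < k then (0 : ℂ) else V) = ((n - k : ℕ) : ℂ) * V := by
  have h1 : ∀ i : Fin n, (if (i : ℕ) < k then (0 : ℂ) else V)
      = V - (if (i : ℕ) < k then V else 0) := by
    intro i; split <;> ring
  rw [Finset.sum_congr rfl fun i _ => h1 i, Finset.sum_sub_distrib, Finset.sum_const,
    ← sum_castLE h (fun _ => V), Finset.sum_const]
  simp only [Finset.card_univ, Fintype.card_fin, nsmul_eq_mul]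
  rw [Nat.cast_sub h]
  ring

def castEquiv {n m : ℕ} (h : m ≤ n) : Fin m ≃ {j : Fin n // (j : ℕ) < m} where
  toFun i := ⟨Fin.castLE h i, i.isLt⟩
  invFun j := ⟨(j.1 : ℕ), j.2⟩
  left_inv i := rfl
  right_inv j := rfl

def extPerm {n m : ℕ} (h : m ≤ n) (τ : Equiv.Perm (Fin m)) : Equiv.Perm (Fin n) :=
  τ.extendDomain (castEquiv h)

lemma extPerm_castLE {n m : ℕ} (h : m ≤ n) (τ : Equiv.Perm (Fin m)) (j : Fin m) :
    extPerm h τ (Fin.castLE h j) = Fin.castLE h (τ j) :=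
  Equiv.Perm.extendDomain_apply_image τ (castEquiv h) j

lemma extPerm_fix {n m : ℕ} (h : m ≤ n) (τ : Equiv.Perm (Fin m)) (j : Fin n)
    (hj : ¬ (j : ℕ) < m) : extPerm h τ j = j :=
  Equiv.Perm.extendDomain_apply_not_subtype τ (castEquiv h) hj

lemma extPerm_ind {n m : ℕ} (h : m ≤ n) (τ : Equiv.Perm (Fin m)) :
    ∀ j : Fin n, ((extPerm h τ j : ℕ) < m ↔ (j : ℕ) < m) := by
  intro j
  by_cases hj : (j : ℕ) < m
  · have e : Fin.castLE h ⟨(j : ℕ), hj⟩ = j := rfl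
    rw [← e, extPerm_castLE]
    exact iff_of_true (τ ⟨(j : ℕ), hj⟩).isLt hj
  · rw [extPerm_fix h τ j hj]

lemma W_succ (ν : Cplus X → ℂ) {n : ℕ} (p : Fin n → Cplus X) (k : ℕ) (hk : k < n)
    (σ : Equiv.Perm (Fin n)) :
    W ν p (k + 1) σ * ν (p (σ ⟨k, hk⟩))
      = W ν p k σ * (((p (σ ⟨k, hk⟩)).1 : ℝ) : ℂ) := by
  classical
  unfold W
  rw [← Finset.prod_erase_mul Finset.univ _ (Finset.mem_univ (⟨k, hk⟩ : Fin n)),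
    ← Finset.prod_erase_mul Finset.univ _ (Finset.mem_univ (⟨k, hk⟩ : Fin n))]
  have he : (∏ i ∈ Finset.univ.erase (⟨k, hk⟩ : Fin n),
        if (i : ℕ) < k + 1 then (((p (σ i)).1 : ℝ) : ℂ) else ν (p (σ i)))
      = ∏ i ∈ Finset.univ.erase (⟨k, hk⟩ : Fin n),
        if (i : ℕ) < k then (((p (σ i)).1 : ℝ) : ℂ) else ν (p (σ i)) := by
    refine Finset.prod_congr rfl fun i hi => ?_
    have hik : (i : ℕ) ≠ k := fun e => (Finset.mem_erase.mp hi).1 (Fin.ext e)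
    exact if_congr (by omega) rfl rfl
  rw [he, if_pos (Nat.lt_succ_self k), if_neg (lt_irrefl k)]
  ring

lemma creal_id (n k : ℕ) (hk : k < n) :
    creal n (k + 1) * (Real.sqrt ((k : ℝ) + 1) / (16 * Real.pi) / ((k + 1).factorial : ℝ))
        * ((k + 1).factorial : ℝ)
      = creal n k * ((n - k : ℕ) : ℝ) := by
  have hπ : (16 : ℝ) * Real.pi ≠ 0 := by positivity
  have hfn : ((n.factorial : ℕ) : ℝ) ≠ 0 := by exact_mod_cast n.factorial_ne_zero
  have hfk1 : (((k + 1).factorial : ℕ) : ℝ) ≠ 0 := by exact_mod_cast (k + 1).factorial_ne_zero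
  have hfnk1 : (((n - (k + 1)).factorial : ℕ) : ℝ) ≠ 0 := by
    exact_mod_cast (n - (k + 1)).factorial_ne_zero
  have hnkR : ((n - k : ℕ) : ℝ) ≠ 0 := by
    have : 0 < n - k := by omega
    exact_mod_cast this.ne'
  have e : n - k = (n - (k + 1)) + 1 := by omega
  have hnk : ((n - k).factorial : ℝ) = ((n - k : ℕ) : ℝ) * ((n - (k + 1)).factorial : ℝ) := by
    calc ((n - k).factorial : ℝ) = (((n - (k + 1)) + 1).factorial : ℝ) := by rw [e]
      _ = (((n - (k + 1)) + 1 : ℕ) : ℝ) * ((n - (k + 1)).factorial : ℝ) := by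
          rw [Nat.factorial_succ]; push_cast; ring
      _ = ((n - k : ℕ) : ℝ) * ((n - (k + 1)).factorial : ℝ) := by rw [← e]
  have hs : Real.sqrt ((n.factorial : ℝ) / ((k + 1).factorial : ℝ)) * Real.sqrt ((k : ℝ) + 1)
      = Real.sqrt ((n.factorial : ℝ) / (k.factorial : ℝ)) := by
    rw [← Real.sqrt_mul (by positivity)]
    congr 1
    rw [Nat.factorial_succ]
    have hfk : ((k.factorial : ℕ) : ℝ) ≠ 0 := by exact_mod_cast k.factorial_ne_zero
    have hk1 : ((k : ℝ) + 1) ≠ 0 := by positivity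
    push_cast
    field_simp
  unfold creal
  rw [← hs, hnk, pow_succ]
  field_simp

lemma coef_id (n k : ℕ) (hk : k < n) :
    Coef n (k + 1)
        * ((Real.sqrt ((k : ℝ) + 1) / (16 * Real.pi) / ((k + 1).factorial : ℝ) : ℝ) : ℂ)
        * ((k + 1).factorial : ℂ)
      = Coef n k * ((n - k : ℕ) : ℂ) := by
  unfold Coef
  have := creal_id n k hk
  have e1 : (((k + 1).factorial : ℝ) : ℂ) = ((k + 1).factorial : ℂ) := by push_cast; ring
  have e2 : (((n - k : ℕ) : ℝ) : ℂ) = ((n - k : ℕ) : ℂ) := by push_cast; ring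
  calc (creal n (k + 1) : ℂ)
        * ((Real.sqrt ((k : ℝ) + 1) / (16 * Real.pi) / ((k + 1).factorial : ℝ) : ℝ) : ℂ)
        * ((k + 1).factorial : ℂ)
      = (((creal n (k + 1) * (Real.sqrt ((k : ℝ) + 1) / (16 * Real.pi)
          / ((k + 1).factorial : ℝ)) * ((k + 1).factorial : ℝ)) : ℝ) : ℂ) := by
        rw [Complex.ofReal_mul, Complex.ofReal_mul, e1]
    _ = ((creal n k * ((n - k : ℕ) : ℝ) : ℝ) : ℂ) := by rw [this]
    _ = (creal n k : ℂ) * ((n - k : ℕ) : ℂ) := by rw [Complex.ofReal_mul, e2]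

lemma sum_swap_phi (f : X → ℂ) (ν : Cplus X → ℂ) {n : ℕ} (p : Fin n → Cplus X)
    (k : ℕ) (hk : k < n) (hkn : k ≤ n) (i : Fin n) (hi : ¬ ((i : ℕ) < k))
    (g : (Fin k → Cplus X) → ℂ) :
    ∑ σ : Equiv.Perm (Fin n),
        W ν p k σ * phi f (p (σ i)) * g (fun j => p (σ (Fin.castLE hkn j)))
      = ∑ σ : Equiv.Perm (Fin n),
        W ν p k σ * phi f (p (σ ⟨k, hk⟩)) * g (fun j => p (σ (Fin.castLE hkn j))) := by
  classical
  set K : Fin n := ⟨k, hk⟩ with hK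
  set ρ : Equiv.Perm (Fin n) := Equiv.swap K i with hρ
  have hind : ∀ j : Fin n, ((ρ j : ℕ) < k ↔ (j : ℕ) < k) := by
    intro j
    by_cases hjK : j = K
    · subst hjK
      rw [hρ, Equiv.swap_apply_left]
      exact iff_of_false hi (lt_irrefl k)
    · by_cases hji : j = i
      · subst hji
        rw [hρ, Equiv.swap_apply_right]
        exact iff_of_false (lt_irrefl k) hi
      · rw [hρ, Equiv.swap_apply_of_ne_of_ne hjK hji]
  have hfix : ∀ j : Fin n, (j : ℕ) < k → ρ j = j := by
    intro j hj
    refine Equiv.swap_apply_of_ne_of_ne ?_ ?_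
    · exact Fin.ne_of_val_ne (Nat.ne_of_lt hj)
    · exact Fin.ne_of_val_ne (fun e => hi (e ▸ hj))
  calc ∑ σ : Equiv.Perm (Fin n),
        W ν p k σ * phi f (p (σ i)) * g (fun j => p (σ (Fin.castLE hkn j)))
      = ∑ σ : Equiv.Perm (Fin n),
        W ν p k (σ * ρ) * phi f (p ((σ * ρ) i)) * g (fun j => p ((σ * ρ) (Fin.castLE hkn j))) :=
        (sum_mul_perm ρ (fun σ =>
          W ν p k σ * phi f (p (σ i)) * g (fun j => p (σ (Fin.castLE hkn j))))).symm
    _ = ∑ σ : Equiv.Perm (Fin n),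
        W ν p k σ * phi f (p (σ ⟨k, hk⟩)) * g (fun j => p (σ (Fin.castLE hkn j))) := by
        refine Finset.sum_congr rfl fun σ _ => ?_
        rw [W_mul_perm ν p k ρ σ hind]
        simp only [Equiv.Perm.mul_apply]
        rw [show ρ i = K from Equiv.swap_apply_right K i]
        congr 2
        funext j
        rw [hfix (Fin.castLE hkn j) j.isLt]

lemma term_succ (f : X → ℂ) (ν : Cplus X → ℂ) {n : ℕ} (p : Fin n → Cplus X)
    (ψ : ∀ m : ℕ, (Fin m → Cplus X) → ℂ) (k : ℕ) (hk : k + 1 ≤ n) :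
    Term ν p (nullMemOp f ν ψ) (k + 1) hk
      = (∑ i : Fin n, phi f (p i)) * Term ν p ψ (k + 1) hk
        - Dp f ν p ψ (k + 1) hk + Dp f ν p ψ k (Nat.le_of_succ_le hk) := by
  classical
  have hnm : ∀ q : Fin (k + 1) → Cplus X,
      nullMemOp f ν ψ (k + 1) q
        = (∑ i : Fin (k + 1), (((q i).1 : ℝ) : ℂ) * f (q i).2) * ψ (k + 1) q +
          ((Real.sqrt ((k : ℝ) + 1) / (16 * Real.pi) / ((k + 1).factorial : ℝ) : ℝ) : ℂ) *
            ∑ τ : Equiv.Perm (Fin (k + 1)),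
              ψ k (fun i : Fin k => q (τ i.castSucc)) *
                f (q (τ (Fin.last k))).2 * ν (q (τ (Fin.last k))) := fun q => rfl
  -- split of the pairing sum into the two parts of the operator
  have hsplit : (∑ σ : Equiv.Perm (Fin n),
        W ν p (k + 1) σ * nullMemOp f ν ψ (k + 1) (fun i => p (σ (Fin.castLE hk i))))
      = (∑ σ : Equiv.Perm (Fin n),
          W ν p (k + 1) σ * ((∑ i : Fin (k + 1), phi f (p (σ (Fin.castLE hk i)))) *
            ψ (k + 1) (fun i => p (σ (Fin.castLE hk i)))))
        + (∑ σ : Equiv.Perm (Fin n),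
          W ν p (k + 1) σ *
            (((Real.sqrt ((k : ℝ) + 1) / (16 * Real.pi) / ((k + 1).factorial : ℝ) : ℝ) : ℂ) *
              ∑ τ : Equiv.Perm (Fin (k + 1)),
                ψ k (fun i : Fin k => p (σ (Fin.castLE hk (τ i.castSucc)))) *
                  f (p (σ (Fin.castLE hk (τ (Fin.last k))))).2 *
                  ν (p (σ (Fin.castLE hk (τ (Fin.last k))))))) := by
    rw [← Finset.sum_add_distrib]
    refine Finset.sum_congr rfl fun σ _ => ?_
    simp only [hnm, phi]
    ring
  -- the A-part
  have e1 : ∀ σ : Equiv.Perm (Fin n),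
      (∑ i : Fin (k + 1), phi f (p (σ (Fin.castLE hk i))))
        = (∑ i : Fin n, phi f (p i))
          - ∑ i : Fin n, if (i : ℕ) < k + 1 then 0 else phi f (p (σ i)) := by
    intro σ
    rw [sum_castLE hk (fun i => phi f (p (σ i))),
      show (∑ i : Fin n, phi f (p i)) = ∑ i : Fin n, phi f (p (σ i)) from
        (Equiv.sum_comp σ (fun i => phi f (p i))).symm,
      ← Finset.sum_sub_distrib]
    refine Finset.sum_congr rfl fun i _ => ?_
    split_ifs <;> ring
  have hA : ∀ σ : Equiv.Perm (Fin n),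
      W ν p (k + 1) σ * ((∑ i : Fin (k + 1), phi f (p (σ (Fin.castLE hk i)))) *
          ψ (k + 1) (fun i => p (σ (Fin.castLE hk i))))
        = (∑ i : Fin n, phi f (p i)) *
            (W ν p (k + 1) σ * ψ (k + 1) (fun i => p (σ (Fin.castLE hk i))))
          - W ν p (k + 1) σ *
              (∑ i : Fin n, if (i : ℕ) < k + 1 then 0 else phi f (p (σ i))) *
              ψ (k + 1) (fun i => p (σ (Fin.castLE hk i))) := by
    intro σ
    rw [e1 σ]
    ring
  have claimA : Coef n (k + 1) * (∑ σ : Equiv.Perm (Fin n),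
        W ν p (k + 1) σ * ((∑ i : Fin (k + 1), phi f (p (σ (Fin.castLE hk i)))) *
          ψ (k + 1) (fun i => p (σ (Fin.castLE hk i)))))
      = (∑ i : Fin n, phi f (p i)) * Term ν p ψ (k + 1) hk - Dp f ν p ψ (k + 1) hk := by
    unfold Term Dp
    rw [Finset.sum_congr rfl fun σ _ => hA σ, Finset.sum_sub_distrib, ← Finset.mul_sum]
    ring
  -- the B-part
  have hb1 : (∑ σ : Equiv.Perm (Fin n),
        W ν p (k + 1) σ *
          (((Real.sqrt ((k : ℝ) + 1) / (16 * Real.pi) / ((k + 1).factorial : ℝ) : ℝ) : ℂ) *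
            ∑ τ : Equiv.Perm (Fin (k + 1)),
              ψ k (fun i : Fin k => p (σ (Fin.castLE hk (τ i.castSucc)))) *
                f (p (σ (Fin.castLE hk (τ (Fin.last k))))).2 *
                ν (p (σ (Fin.castLE hk (τ (Fin.last k)))))))
      = ((Real.sqrt ((k : ℝ) + 1) / (16 * Real.pi) / ((k + 1).factorial : ℝ) : ℝ) : ℂ) *
          ∑ τ : Equiv.Perm (Fin (k + 1)), ∑ σ : Equiv.Perm (Fin n),
            W ν p (k + 1) σ *
              (ψ k (fun i : Fin k => p (σ (Fin.castLE hk (τ i.castSucc)))) *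
                f (p (σ (Fin.castLE hk (τ (Fin.last k))))).2 *
                ν (p (σ (Fin.castLE hk (τ (Fin.last k))))))  := by
    calc (∑ σ : Equiv.Perm (Fin n),
          W ν p (k + 1) σ *
            (((Real.sqrt ((k : ℝ) + 1) / (16 * Real.pi) / ((k + 1).factorial : ℝ) : ℝ) : ℂ) *
              ∑ τ : Equiv.Perm (Fin (k + 1)),
                ψ k (fun i : Fin k => p (σ (Fin.castLE hk (τ i.castSucc)))) *
                  f (p (σ (Fin.castLE hk (τ (Fin.last k))))).2 *
                  ν (p (σ (Fin.castLE hk (τ (Fin.last k)))))))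
        = ∑ σ : Equiv.Perm (Fin n), ∑ τ : Equiv.Perm (Fin (k + 1)),
            ((Real.sqrt ((k : ℝ) + 1) / (16 * Real.pi) / ((k + 1).factorial : ℝ) : ℝ) : ℂ) *
              (W ν p (k + 1) σ *
                (ψ k (fun i : Fin k => p (σ (Fin.castLE hk (τ i.castSucc)))) *
                  f (p (σ (Fin.castLE hk (τ (Fin.last k))))).2 *
                  ν (p (σ (Fin.castLE hk (τ (Fin.last k)))))))  := by
          refine Finset.sum_congr rfl fun σ _ => ?_
          rw [Finset.mul_sum, Finset.mul_sum]
          refine Finset.sum_congr rfl fun τ _ => ?_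
          ring
      _ = ∑ τ : Equiv.Perm (Fin (k + 1)), ∑ σ : Equiv.Perm (Fin n),
            ((Real.sqrt ((k : ℝ) + 1) / (16 * Real.pi) / ((k + 1).factorial : ℝ) : ℝ) : ℂ) *
              (W ν p (k + 1) σ *
                (ψ k (fun i : Fin k => p (σ (Fin.castLE hk (τ i.castSucc)))) *
                  f (p (σ (Fin.castLE hk (τ (Fin.last k))))).2 *
                  ν (p (σ (Fin.castLE hk (τ (Fin.last k)))))))  := Finset.sum_comm
      _ = ∑ τ : Equiv.Perm (Fin (k + 1)),
            ((Real.sqrt ((k : ℝ) + 1) / (16 * Real.pi) / ((k + 1).factorial : ℝ) : ℝ) : ℂ) *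
              ∑ σ : Equiv.Perm (Fin n),
                W ν p (k + 1) σ *
                  (ψ k (fun i : Fin k => p (σ (Fin.castLE hk (τ i.castSucc)))) *
                    f (p (σ (Fin.castLE hk (τ (Fin.last k))))).2 *
                    ν (p (σ (Fin.castLE hk (τ (Fin.last k))))))  :=
          Finset.sum_congr rfl fun τ _ => (Finset.mul_sum _ _ _).symm
      _ = ((Real.sqrt ((k : ℝ) + 1) / (16 * Real.pi) / ((k + 1).factorial : ℝ) : ℝ) : ℂ) *
            ∑ τ : Equiv.Perm (Fin (k + 1)), ∑ σ : Equiv.Perm (Fin n),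
              W ν p (k + 1) σ *
                (ψ k (fun i : Fin k => p (σ (Fin.castLE hk (τ i.castSucc)))) *
                  f (p (σ (Fin.castLE hk (τ (Fin.last k))))).2 *
                  ν (p (σ (Fin.castLE hk (τ (Fin.last k))))))  :=
          (Finset.mul_sum _ _ _).symm
  have hb2 : ∀ τ : Equiv.Perm (Fin (k + 1)),
      (∑ σ : Equiv.Perm (Fin n),
        W ν p (k + 1) σ *
          (ψ k (fun i : Fin k => p (σ (Fin.castLE hk (τ i.castSucc)))) *
            f (p (σ (Fin.castLE hk (τ (Fin.last k))))).2 *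
            ν (p (σ (Fin.castLE hk (τ (Fin.last k)))))))
      = ∑ σ : Equiv.Perm (Fin n),
        W ν p (k + 1) σ *
          (ψ k (fun i : Fin k => p (σ (Fin.castLE hk i.castSucc))) *
            f (p (σ (Fin.castLE hk (Fin.last k)))).2 *
            ν (p (σ (Fin.castLE hk (Fin.last k))))) := by
    intro τ
    rw [← sum_mul_perm (extPerm hk τ) (fun σ =>
      W ν p (k + 1) σ *
        (ψ k (fun i : Fin k => p (σ (Fin.castLE hk i.castSucc))) *
          f (p (σ (Fin.castLE hk (Fin.last k)))).2 *
          ν (p (σ (Fin.castLE hk (Fin.last k))))))]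
    refine Finset.sum_congr rfl fun σ _ => ?_
    rw [W_mul_perm ν p (k + 1) (extPerm hk τ) σ (extPerm_ind hk τ)]
    simp only [Equiv.Perm.mul_apply, extPerm_castLE]
  have hb4 : ∀ σ : Equiv.Perm (Fin n),
      W ν p (k + 1) σ *
          (ψ k (fun i : Fin k => p (σ (Fin.castLE hk i.castSucc))) *
            f (p (σ (Fin.castLE hk (Fin.last k)))).2 *
            ν (p (σ (Fin.castLE hk (Fin.last k)))))
        = W ν p k σ * phi f (p (σ ⟨k, hk⟩)) *
            ψ k (fun i => p (σ (Fin.castLE (Nat.le_of_succ_le hk) i))) := by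
    intro σ
    have ea : Fin.castLE hk (Fin.last k) = (⟨k, hk⟩ : Fin n) := rfl
    have eb : (fun i : Fin k => p (σ (Fin.castLE hk i.castSucc)))
        = fun i : Fin k => p (σ (Fin.castLE (Nat.le_of_succ_le hk) i)) := rfl
    rw [ea, eb]
    have e3 := W_succ ν p k hk σ
    calc W ν p (k + 1) σ *
          (ψ k (fun i : Fin k => p (σ (Fin.castLE (Nat.le_of_succ_le hk) i))) *
            f (p (σ ⟨k, hk⟩)).2 * ν (p (σ ⟨k, hk⟩)))
        = (W ν p (k + 1) σ * ν (p (σ ⟨k, hk⟩))) *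
            (f (p (σ ⟨k, hk⟩)).2 *
              ψ k (fun i : Fin k => p (σ (Fin.castLE (Nat.le_of_succ_le hk) i)))) := by ring
      _ = (W ν p k σ * (((p (σ ⟨k, hk⟩)).1 : ℝ) : ℂ)) *
            (f (p (σ ⟨k, hk⟩)).2 *
              ψ k (fun i : Fin k => p (σ (Fin.castLE (Nat.le_of_succ_le hk) i)))) := by rw [e3]
      _ = W ν p k σ * phi f (p (σ ⟨k, hk⟩)) *
            ψ k (fun i => p (σ (Fin.castLE (Nat.le_of_succ_le hk) i))) := by
          simp only [phi]; ring
  have hb5 : (∑ σ : Equiv.Perm (Fin n),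
        W ν p k σ * (∑ i : Fin n, if (i : ℕ) < k then 0 else phi f (p (σ i))) *
          ψ k (fun i => p (σ (Fin.castLE (Nat.le_of_succ_le hk) i))))
      = ((n - k : ℕ) : ℂ) * ∑ σ : Equiv.Perm (Fin n),
          W ν p k σ * phi f (p (σ ⟨k, hk⟩)) *
            ψ k (fun i => p (σ (Fin.castLE (Nat.le_of_succ_le hk) i))) := by
    have h1 : ∀ σ : Equiv.Perm (Fin n),
        W ν p k σ * (∑ i : Fin n, if (i : ℕ) < k then 0 else phi f (p (σ i))) *
            ψ k (fun i => p (σ (Fin.castLE (Nat.le_of_succ_le hk) i)))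
          = ∑ i : Fin n, if (i : ℕ) < k then 0 else
              W ν p k σ * phi f (p (σ i)) *
                ψ k (fun j => p (σ (Fin.castLE (Nat.le_of_succ_le hk) j))) := by
      intro σ
      rw [Finset.mul_sum, Finset.sum_mul]
      refine Finset.sum_congr rfl fun i _ => ?_
      split_ifs with h <;> ring
    rw [Finset.sum_congr rfl fun σ _ => h1 σ, Finset.sum_comm]
    have h2 : ∀ i : Fin n,
        (∑ σ : Equiv.Perm (Fin n), if (i : ℕ) < k then 0 else
            W ν p k σ * phi f (p (σ i)) *
              ψ k (fun j => p (σ (Fin.castLE (Nat.le_of_succ_le hk) j))))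
          = if (i : ℕ) < k then 0 else
              ∑ σ : Equiv.Perm (Fin n),
                W ν p k σ * phi f (p (σ ⟨k, hk⟩)) *
                  ψ k (fun j => p (σ (Fin.castLE (Nat.le_of_succ_le hk) j))) := by
      intro i
      split_ifs with h
      · simp
      · exact sum_swap_phi f ν p k hk (Nat.le_of_succ_le hk) i h (ψ k)
    rw [Finset.sum_congr rfl fun i _ => h2 i]
    exact sum_ite_const k (Nat.le_of_succ_le hk) _
  have claimB : Coef n (k + 1) * (∑ σ : Equiv.Perm (Fin n),
        W ν p (k + 1) σ *
          (((Real.sqrt ((k : ℝ) + 1) / (16 * Real.pi) / ((k + 1).factorial : ℝ) : ℝ) : ℂ) *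
            ∑ τ : Equiv.Perm (Fin (k + 1)),
              ψ k (fun i : Fin k => p (σ (Fin.castLE hk (τ i.castSucc)))) *
                f (p (σ (Fin.castLE hk (τ (Fin.last k))))).2 *
                ν (p (σ (Fin.castLE hk (τ (Fin.last k)))))))
      = Dp f ν p ψ k (Nat.le_of_succ_le hk) := by
    rw [hb1, Finset.sum_congr rfl fun τ _ => hb2 τ, Finset.sum_const, Finset.card_univ,
      Fintype.card_perm, Fintype.card_fin, nsmul_eq_mul,
      Finset.sum_congr rfl fun σ _ => hb4 σ]
    unfold Dp
    rw [hb5]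
    have hc := coef_id n k hk
    linear_combination (∑ σ : Equiv.Perm (Fin n),
      W ν p k σ * phi f (p (σ ⟨k, hk⟩)) *
        ψ k (fun i => p (σ (Fin.castLE (Nat.le_of_succ_le hk) i)))) * hc
  -- assemble
  have hTermL : Term ν p (nullMemOp f ν ψ) (k + 1) hk
      = Coef n (k + 1) * (∑ σ : Equiv.Perm (Fin n),
          W ν p (k + 1) σ * ((∑ i : Fin (k + 1), phi f (p (σ (Fin.castLE hk i)))) *
            ψ (k + 1) (fun i => p (σ (Fin.castLE hk i)))))
        + Coef n (k + 1) * (∑ σ : Equiv.Perm (Fin n),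
          W ν p (k + 1) σ *
            (((Real.sqrt ((k : ℝ) + 1) / (16 * Real.pi) / ((k + 1).factorial : ℝ) : ℝ) : ℂ) *
              ∑ τ : Equiv.Perm (Fin (k + 1)),
                ψ k (fun i : Fin k => p (σ (Fin.castLE hk (τ i.castSucc)))) *
                  f (p (σ (Fin.castLE hk (τ (Fin.last k))))).2 *
                  ν (p (σ (Fin.castLE hk (τ (Fin.last k))))))) := by
    unfold Term
    rw [hsplit, mul_add]
  rw [hTermL, claimA, claimB]

def G1 (f : X → ℂ) (ν : Cplus X → ℂ) {n : ℕ} (p : Fin n → Cplus X)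
    (ψ : ∀ m : ℕ, (Fin m → Cplus X) → ℂ) (m : ℕ) : ℂ :=
  if h : m ≤ n then Term ν p (nullMemOp f ν ψ) m h else 0

def G2 (ν : Cplus X → ℂ) {n : ℕ} (p : Fin n → Cplus X)
    (ψ : ∀ m : ℕ, (Fin m → Cplus X) → ℂ) (m : ℕ) : ℂ :=
  if h : m ≤ n then Term ν p ψ m h else 0

def GD (f : X → ℂ) (ν : Cplus X → ℂ) {n : ℕ} (p : Fin n → Cplus X)
    (ψ : ∀ m : ℕ, (Fin m → Cplus X) → ℂ) (m : ℕ) : ℂ :=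
  if h : m ≤ n then Dp f ν p ψ m h else 0

lemma G1_zero (f : X → ℂ) (ν : Cplus X → ℂ) {n : ℕ} (p : Fin n → Cplus X)
    (ψ : ∀ m : ℕ, (Fin m → Cplus X) → ℂ) : G1 f ν p ψ 0 = 0 := by
  unfold G1
  rw [dif_pos (Nat.zero_le n)]
  unfold Term
  have h0 : ∀ σ : Equiv.Perm (Fin n),
      W ν p 0 σ * nullMemOp f ν ψ 0 (fun i => p (σ (Fin.castLE (Nat.zero_le n) i))) = 0 := by
    intro σ
    have : nullMemOp f ν ψ 0 (fun i => p (σ (Fin.castLE (Nat.zero_le n) i))) = 0 := rfl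
    rw [this, mul_zero]
  rw [Finset.sum_congr rfl fun σ _ => h0 σ, Finset.sum_const_zero, mul_zero]

lemma GD_zero (f : X → ℂ) (ν : Cplus X → ℂ) {n : ℕ} (p : Fin n → Cplus X)
    (ψ : ∀ m : ℕ, (Fin m → Cplus X) → ℂ) :
    GD f ν p ψ 0 = (∑ i : Fin n, phi f (p i)) * G2 ν p ψ 0 := by
  unfold GD G2
  rw [dif_pos (Nat.zero_le n), dif_pos (Nat.zero_le n)]
  unfold Dp Term
  have h0 : ∀ σ : Equiv.Perm (Fin n),
      W ν p 0 σ * (∑ i : Fin n, if (i : ℕ) < 0 then 0 else phi f (p (σ i))) *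
          ψ 0 (fun i => p (σ (Fin.castLE (Nat.zero_le n) i)))
        = (∑ i : Fin n, phi f (p i)) *
            (W ν p 0 σ * ψ 0 (fun i => p (σ (Fin.castLE (Nat.zero_le n) i)))) := by
    intro σ
    have e : (∑ i : Fin n, if (i : ℕ) < 0 then (0 : ℂ) else phi f (p (σ i)))
        = ∑ i : Fin n, phi f (p i) := by
      rw [Finset.sum_congr rfl fun i _ => if_neg (Nat.not_lt_zero _)]
      exact Equiv.sum_comp σ (fun i => phi f (p i))
    rw [e]
    ring
  rw [Finset.sum_congr rfl fun σ _ => h0 σ, ← Finset.mul_sum]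
  ring

lemma GD_top (f : X → ℂ) (ν : Cplus X → ℂ) {n : ℕ} (p : Fin n → Cplus X)
    (ψ : ∀ m : ℕ, (Fin m → Cplus X) → ℂ) : GD f ν p ψ n = 0 := by
  unfold GD
  rw [dif_pos le_rfl]
  unfold Dp
  have h0 : ∀ σ : Equiv.Perm (Fin n),
      W ν p n σ * (∑ i : Fin n, if (i : ℕ) < n then 0 else phi f (p (σ i))) *
          ψ n (fun i => p (σ (Fin.castLE le_rfl i))) = 0 := by
    intro σ
    have e : (∑ i : Fin n, if (i : ℕ) < n then (0 : ℂ) else phi f (p (σ i))) = 0 := by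
      rw [Finset.sum_congr rfl fun i _ => if_pos i.isLt, Finset.sum_const_zero]
    rw [e, mul_zero, zero_mul]
  rw [Finset.sum_congr rfl fun σ _ => h0 σ, Finset.sum_const_zero, mul_zero]

lemma key_sum (f : X → ℂ) (ν : Cplus X → ℂ) {n : ℕ} (p : Fin n → Cplus X)
    (ψ : ∀ m : ℕ, (Fin m → Cplus X) → ℂ) :
    (∑ m ∈ Finset.range (n + 1), G1 f ν p ψ m)
      = (∑ i : Fin n, phi f (p i)) * ∑ m ∈ Finset.range (n + 1), G2 ν p ψ m := by
  have hsuccG : ∀ k, k < n →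
      G1 f ν p ψ (k + 1)
        = (∑ i : Fin n, phi f (p i)) * G2 ν p ψ (k + 1)
            - GD f ν p ψ (k + 1) + GD f ν p ψ k := by
    intro k hkn
    unfold G1 G2 GD
    have hk1 : k + 1 ≤ n := hkn
    rw [dif_pos hk1, dif_pos hk1, dif_pos hk1, dif_pos (Nat.le_of_succ_le hk1)]
    exact term_succ f ν p ψ k hk1
  rw [Finset.sum_range_succ' (G1 f ν p ψ) n, Finset.sum_range_succ' (G2 ν p ψ) n]
  rw [G1_zero, add_zero]
  rw [Finset.sum_congr rfl fun k hk => hsuccG k (Finset.mem_range.mp hk)]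
  rw [Finset.sum_add_distrib, Finset.sum_sub_distrib]
  have e2 : ∑ k ∈ Finset.range n, GD f ν p ψ (k + 1)
      = (∑ m ∈ Finset.range (n + 1), GD f ν p ψ m) - GD f ν p ψ 0 := by
    rw [Finset.sum_range_succ' (GD f ν p ψ) n]
    ring
  have e3 : ∑ k ∈ Finset.range n, GD f ν p ψ k
      = ∑ m ∈ Finset.range (n + 1), GD f ν p ψ m := by
    rw [Finset.sum_range_succ, GD_top, add_zero]
  rw [e2, e3, GD_zero, ← Finset.mul_sum]
  ring

end BMSEigenAux

/-- **Improper eigenstates of supermomentum** (computational core): the BMS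
`n`-particle states are improper eigenstates of the null memory operator `T_f`
with eigenvalue `Σᵢ ωᵢ f(p̂ᵢ)`:
`Fₙ[T_f ψ](p) = (Σ_{i=1}^{n} ω(pᵢ) f(x̂(pᵢ))) · Fₙ[ψ](p)`. -/


theorem bms_particles_eigenstates_of_null_memory
    {X : Type*} (A : ℂ) (ν : Cplus X → ℂ) (f : X → ℂ)
    (ψ : ∀ m : ℕ, (Fin m → Cplus X) → ℂ) (hsym : IsSymmFamily ψ)
    (n : ℕ) (p : Fin n → Cplus X) :
    pairing A ν (nullMemOp f ν ψ) n p =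
      (∑ i : Fin n, (((p i).1 : ℝ) : ℂ) * f (p i).2) * pairing A ν ψ n p := by
  classical
  open BMSEigenAux in
  have hE : (∑ i : Fin n, (((p i).1 : ℝ) : ℂ) * f (p i).2)
      = ∑ i : Fin n, BMSEigenAux.phi f (p i) := rfl
  have b1 : (∑ m : Fin (n + 1),
        BMSEigenAux.Term ν p (nullMemOp f ν ψ) (m : ℕ) (Nat.lt_succ_iff.mp m.isLt))
      = ∑ m ∈ Finset.range (n + 1), BMSEigenAux.G1 f ν p ψ m := by
    rw [← Fin.sum_univ_eq_sum_range (BMSEigenAux.G1 f ν p ψ) (n + 1)]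
    refine Finset.sum_congr rfl fun m _ => ?_
    unfold BMSEigenAux.G1
    exact (dif_pos (Nat.lt_succ_iff.mp m.isLt)).symm
  have b2 : (∑ m : Fin (n + 1),
        BMSEigenAux.Term ν p ψ (m : ℕ) (Nat.lt_succ_iff.mp m.isLt))
      = ∑ m ∈ Finset.range (n + 1), BMSEigenAux.G2 ν p ψ m := by
    rw [← Fin.sum_univ_eq_sum_range (BMSEigenAux.G2 ν p ψ) (n + 1)]
    refine Finset.sum_congr rfl fun m _ => ?_
    unfold BMSEigenAux.G2
    exact (dif_pos (Nat.lt_succ_iff.mp m.isLt)).symm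
  rw [BMSEigenAux.pairing_eq A ν (nullMemOp f ν ψ) n p, BMSEigenAux.pairing_eq A ν ψ n p,
    b1, b2, BMSEigenAux.key_sum f ν p ψ, hE]
  ring


end
end

section
/- Let X be a set, C₊ := ℝ≥0 × X, A ∈ ℂ with A ≠ 0, ν : C₊ → ℂ, and let ψ = (ψₘ) be a component family with each ψₘ symmetric. If Fₙ[ψ](p) = 0 for every n ∈ ℕ and every p : Fin n → C₊ whose frequencies ω(p_i) are all strictly positive, then ψₘ(p) = 0 for every m and every p : Fin m → C₊ with all frequencies strictly positive. (This is the computational core of the paper's Completeness Theorem: the BMS particles form a complete improper basis of each memory Fock space.) -/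
open scoped BigOperators

noncomputable section

/-- **Completeness of the BMS particle basis** (computational core): if `A ≠ 0`
and all the BMS-particle pairings `Fₙ[ψ](p)` vanish on configurations of
strictly positive frequencies, then all the components `ψₘ` vanish on such
configurations. -/
theorem bms_particles_complete
    {X : Type*} (A : ℂ) (hA : A ≠ 0) (ν : Cplus X → ℂ)
    (ψ : ∀ m : ℕ, (Fin m → Cplus X) → ℂ) (hsym : IsSymmFamily ψ)
    (hvanish : ∀ (n : ℕ) (p : Fin n → Cplus X),
      (∀ i, 0 < (p i).1) → pairing A ν ψ n p = 0) :
    ∀ (m : ℕ) (p : Fin m → Cplus X), (∀ i, 0 < (p i).1) → ψ m p = 0 := by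
  intro m
  induction m using Nat.strong_induction_on with
  | _ n IH =>
    intro p hp
    have hv := hvanish n p hp
    unfold pairing at hv
    rw [Fin.sum_univ_castSucc] at hv
    have hz : ∀ (m : Fin n) (σ : Equiv.Perm (Fin n)),
        ψ ((Fin.castSucc m : Fin (n+1)) : ℕ)
          (fun i => p (σ (Fin.castLE (Nat.lt_succ_iff.mp (Fin.castSucc m).isLt) i))) = 0 := by
      intro m σ
      exact IH (m : ℕ) m.isLt _ (fun i => hp _)
    simp only [hz, mul_zero, Finset.sum_const_zero, zero_add, Fin.val_last] at hv
    have hif : ∀ (σ : Equiv.Perm (Fin n)) (i : Fin n),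
        (if (i : ℕ) < n then (((p (σ i)).1 : ℝ) : ℂ) else ν (p (σ i)))
          = (((p (σ i)).1 : ℝ) : ℂ) := by
      intro σ i; rw [if_pos i.isLt]
    have hψ : ∀ (σ : Equiv.Perm (Fin n)) (h : n ≤ n),
        ψ n (fun i : Fin n => p (σ (Fin.castLE h i))) = ψ n p := by
      intro σ h
      have he : (fun i : Fin n => p (σ (Fin.castLE h i))) = p ∘ σ := by
        funext i; rfl
      rw [he, hsym n σ p]
    have hprod : ∀ σ : Equiv.Perm (Fin n),
        (∏ i : Fin n, (((p (σ i)).1 : ℝ) : ℂ)) = ∏ i : Fin n, (((p i).1 : ℝ) : ℂ) :=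
      fun σ => Equiv.prod_comp σ (fun j => (((p j).1 : ℝ) : ℂ))
    simp only [hif, hψ, hprod] at hv
    rw [Finset.sum_const, Finset.card_univ, Fintype.card_perm] at hv
    have hc : (((16 * Real.pi) ^ n * Real.sqrt ((n.factorial : ℝ) / (n.factorial : ℝ))
        / ((n - n).factorial : ℝ) / (n.factorial : ℝ) : ℝ) : ℂ) ≠ 0 := by
      rw [Complex.ofReal_ne_zero]
      have hπ : (0:ℝ) < Real.pi := Real.pi_pos
      have hfac : (0:ℝ) < (n.factorial : ℝ) := by positivity
      rw [div_self (ne_of_gt hfac), Real.sqrt_one]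
      positivity
    have hW : (∏ i : Fin n, (((p i).1 : ℝ) : ℂ)) ≠ 0 := by
      apply Finset.prod_ne_zero_iff.mpr
      intro i _
      exact Complex.ofReal_ne_zero.mpr (ne_of_gt (hp i))
    have hfac : (((Fintype.card (Fin n)).factorial : ℕ) : ℂ) ≠ 0 :=
      Nat.cast_ne_zero.mpr (Fintype.card (Fin n)).factorial_ne_zero
    simp only [nsmul_eq_mul, mul_eq_zero] at hv
    rcases hv with h | h
    · exact absurd h hA
    rcases h with h | h
    · exact absurd h hc
    rcases h with h | h
    · exact absurd h hfac
    rcases h with h | h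
    · exact absurd h hW
    · exact h

end
end

section
/- Let X be a topological space, C₊ := ℝ≥0 × X with the product topology, A ∈ ℂ, ν : C₊ → ℂ continuous, and let ψ = (ψₘ) be a component family with each ψₘ symmetric and continuous. Then for every n ≥ 1, every p₁,…,p_{n−1} ∈ C₊ and every direction x̂ₙ ∈ X, the limit as ωₙ → 0⁺ of Fₙ[ψ](p₁,…,p_{n−1},(ωₙ,x̂ₙ)) exists and equals (1/√n) · ν(0, x̂ₙ) · F_{n−1}[ψ](p₁,…,p_{n−1}). (This is the computational core of the paper's Soft Factorization Lemma: since ν(0,x̂) = √(2/π)·Δ(x̂), the pairing with the BMS n-particle state factorizes as one frequency is taken to zero, producing the factor √(2/(πn))·Δ(p̂ₙ).) -/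
open scoped BigOperators

noncomputable section

namespace BMSAux

/-- Extend `τ : Perm (Fin k)` to a permutation of `Fin (k+1)` sending `j` to `last`
and `j.succAbove i` to `(τ i).castSucc`. -/
def permExt {k : ℕ} (j : Fin (k+1)) (τ : Equiv.Perm (Fin k)) : Equiv.Perm (Fin (k+1)) :=
  ((finSuccEquiv' j).trans (Equiv.optionCongr τ)).trans (finSuccEquiv' (Fin.last k)).symm

lemma permExt_self {k : ℕ} (j : Fin (k+1)) (τ : Equiv.Perm (Fin k)) :
    permExt j τ j = Fin.last k := by
  simp [permExt, finSuccEquiv'_at]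

lemma permExt_succAbove {k : ℕ} (j : Fin (k+1)) (τ : Equiv.Perm (Fin k)) (i : Fin k) :
    permExt j τ (j.succAbove i) = (τ i).castSucc := by
  simp [permExt, finSuccEquiv'_succAbove, ← Fin.succAbove_last]

lemma permExt_of_lt {k : ℕ} (j : Fin (k+1)) (τ : Equiv.Perm (Fin k)) (i : Fin (k+1))
    (hij : (i : ℕ) < (j : ℕ)) :
    permExt j τ i = (τ ⟨(i : ℕ), lt_of_lt_of_le hij (Nat.lt_succ_iff.mp j.isLt)⟩).castSucc := by
  have hik : (i : ℕ) < k := lt_of_lt_of_le hij (Nat.lt_succ_iff.mp j.isLt)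
  have h1 : j.succAbove ⟨(i : ℕ), hik⟩ = i := by
    rw [Fin.succAbove_of_castSucc_lt]
    · ext; simp
    · rw [Fin.lt_iff_val_lt_val]; simpa using hij
  conv_lhs => rw [← h1]
  rw [permExt_succAbove]

lemma permExt_bijective {k : ℕ} :
    Function.Bijective (fun jt : Fin (k+1) × Equiv.Perm (Fin k) => permExt jt.1 jt.2) := by
  rw [Fintype.bijective_iff_injective_and_card]
  constructor
  · rintro ⟨j, τ⟩ ⟨j', τ'⟩ h
    simp only at h
    have hj : j = j' := by
      have h1 : permExt j τ j = Fin.last k := permExt_self j τ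
      have h2 : permExt j' τ' j' = Fin.last k := permExt_self j' τ'
      rw [h] at h1
      exact (permExt j' τ').injective (h1.trans h2.symm)
    subst hj
    have hτ : τ = τ' := by
      apply Equiv.ext; intro i
      have h1 := permExt_succAbove j τ i
      have h2 := permExt_succAbove j τ' i
      rw [h] at h1
      exact Fin.castSucc_injective _ (h1.symm.trans h2)
    rw [hτ]
  · simp [Fintype.card_perm, Nat.factorial_succ]

lemma succAbove_val_lt_iff {k M : ℕ} (j : Fin (k+1)) (hMj : M ≤ (j : ℕ)) (i : Fin k) :
    ((j.succAbove i : Fin (k+1)) : ℕ) < M ↔ (i : ℕ) < M := by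
  rcases lt_or_ge (Fin.castSucc i) j with h | h
  · rw [Fin.succAbove_of_castSucc_lt _ _ h]; simp
  · rw [Fin.succAbove_of_le_castSucc _ _ h]
    have : (j : ℕ) ≤ (i : ℕ) := by simpa [Fin.le_iff_val_le_val] using h
    simp only [Fin.val_succ]
    omega

lemma sum_indicator {k M : ℕ} (C : ℂ) :
    ∑ j : Fin (k+1), (if M ≤ (j : ℕ) then C else 0) = ((k + 1 - M : ℕ) : ℂ) * C := by
  rw [Fin.sum_univ_eq_sum_range (fun j => if M ≤ j then C else 0) (k+1)]
  rw [← Finset.sum_filter]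
  have : (Finset.range (k+1)).filter (fun j => M ≤ j) = Finset.Ico M (k+1) := by
    ext a; simp [Finset.mem_range, Finset.mem_Ico]; omega
  rw [this, Finset.sum_const, Nat.card_Ico, nsmul_eq_mul]

section Main
variable {X : Type*} (ν : Cplus X → ℂ) (ψ : ∀ m : ℕ, (Fin m → Cplus X) → ℂ)
  (k : ℕ) (p : Fin k → Cplus X) (x : X)

lemma sum_perm_snoc_top :
    ∑ σ : Equiv.Perm (Fin (k+1)),
      (∏ i : Fin (k+1), if (i : ℕ) < k + 1 then
          ((((Fin.snoc p ((0 : NNReal), x) : Fin (k+1) → Cplus X) (σ i)).1 : ℝ) : ℂ)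
        else ν ((Fin.snoc p ((0 : NNReal), x) : Fin (k+1) → Cplus X) (σ i))) *
        ψ (k+1) (fun i : Fin (k+1) => (Fin.snoc p ((0 : NNReal), x) : Fin (k+1) → Cplus X)
          (σ (Fin.castLE (le_refl (k+1)) i)))
      = 0 := by
  apply Finset.sum_eq_zero
  intro σ _
  have hzero : (∏ i : Fin (k+1), if (i : ℕ) < k + 1 then
      ((((Fin.snoc p ((0 : NNReal), x) : Fin (k+1) → Cplus X) (σ i)).1 : ℝ) : ℂ)
    else ν ((Fin.snoc p ((0 : NNReal), x) : Fin (k+1) → Cplus X) (σ i))) = 0 := by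
    apply Finset.prod_eq_zero (Finset.mem_univ (σ.symm (Fin.last k)))
    rw [if_pos (σ.symm (Fin.last k)).isLt]
    simp [Fin.snoc_last]
  rw [hzero, zero_mul]

lemma sum_perm_snoc {M : ℕ} (hM1 : M ≤ k + 1) (hM : M ≤ k) :
    ∑ σ : Equiv.Perm (Fin (k+1)),
      (∏ i : Fin (k+1), if (i : ℕ) < M then
          ((((Fin.snoc p ((0 : NNReal), x) : Fin (k+1) → Cplus X) (σ i)).1 : ℝ) : ℂ)
        else ν ((Fin.snoc p ((0 : NNReal), x) : Fin (k+1) → Cplus X) (σ i))) *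
        ψ M (fun i : Fin M => (Fin.snoc p ((0 : NNReal), x) : Fin (k+1) → Cplus X)
          (σ (Fin.castLE hM1 i)))
      = ((k + 1 - M : ℕ) : ℂ) * ν ((0 : NNReal), x) *
        ∑ τ : Equiv.Perm (Fin k),
          (∏ i : Fin k, if (i : ℕ) < M then (((p (τ i)).1 : ℝ) : ℂ) else ν (p (τ i))) *
            ψ M (fun i : Fin M => p (τ (Fin.castLE hM i))) := by
  classical
  set q : Fin (k+1) → Cplus X := Fin.snoc p ((0 : NNReal), x) with hq
  set F : Equiv.Perm (Fin (k+1)) → ℂ := fun σ =>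
    (∏ i : Fin (k+1), if (i : ℕ) < M then (((q (σ i)).1 : ℝ) : ℂ) else ν (q (σ i))) *
      ψ M (fun i : Fin M => q (σ (Fin.castLE hM1 i))) with hF
  set G : Equiv.Perm (Fin k) → ℂ := fun τ =>
    (∏ i : Fin k, if (i : ℕ) < M then (((p (τ i)).1 : ℝ) : ℂ) else ν (p (τ i))) *
      ψ M (fun i : Fin M => p (τ (Fin.castLE hM i))) with hG
  show ∑ σ, F σ = _ * ∑ τ, G τ
  have step1 : ∑ σ : Equiv.Perm (Fin (k+1)), F σ
      = ∑ jt : Fin (k+1) × Equiv.Perm (Fin k), F (permExt jt.1 jt.2) :=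
    (Fintype.sum_bijective _ permExt_bijective _ F (fun _ => rfl)).symm
  rw [step1, Fintype.sum_prod_type]
  have step2 : ∀ j : Fin (k+1), ∑ τ : Equiv.Perm (Fin k), F (permExt j τ)
      = if M ≤ (j : ℕ) then ν ((0 : NNReal), x) * ∑ τ : Equiv.Perm (Fin k), G τ else 0 := by
    intro j
    by_cases hj : M ≤ (j : ℕ)
    · rw [if_pos hj, Finset.mul_sum]
      apply Finset.sum_congr rfl
      intro τ _
      have hprod : (∏ i : Fin (k+1), if (i : ℕ) < M then
          (((q (permExt j τ i)).1 : ℝ) : ℂ) else ν (q (permExt j τ i)))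
          = ν ((0 : NNReal), x) *
            ∏ i : Fin k, if (i : ℕ) < M then (((p (τ i)).1 : ℝ) : ℂ) else ν (p (τ i)) := by
        rw [Fin.prod_univ_succAbove (fun i => if (i : ℕ) < M then
          (((q (permExt j τ i)).1 : ℝ) : ℂ) else ν (q (permExt j τ i))) j]
        congr 1
        · rw [if_neg (by omega), permExt_self]
          simp [hq, Fin.snoc_last]
        · apply Finset.prod_congr rfl
          intro i _
          rw [permExt_succAbove]
          by_cases hi : (i : ℕ) < M
          · rw [if_pos ((succAbove_val_lt_iff j hj i).mpr hi), if_pos hi]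
            simp [hq, Fin.snoc_castSucc]
          · rw [if_neg (fun h => hi ((succAbove_val_lt_iff j hj i).mp h)), if_neg hi]
            simp [hq, Fin.snoc_castSucc]
      have hpsi : (fun i : Fin M => q (permExt j τ (Fin.castLE hM1 i)))
          = fun i : Fin M => p (τ (Fin.castLE hM i)) := by
        funext i
        have hlt : ((Fin.castLE hM1 i : Fin (k+1)) : ℕ) < (j : ℕ) :=
          lt_of_lt_of_le i.isLt hj
        rw [permExt_of_lt j τ _ hlt]
        have : (⟨((Fin.castLE hM1 i : Fin (k+1)) : ℕ),
            lt_of_lt_of_le hlt (Nat.lt_succ_iff.mp j.isLt)⟩ : Fin k) = Fin.castLE hM i := by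
          ext; simp
        rw [this]
        simp [hq, Fin.snoc_castSucc]
      rw [hF]
      simp only [hprod, hpsi]
      rw [hG]
      ring
    · rw [if_neg hj]
      apply Finset.sum_eq_zero
      intro τ _
      have hzero : (∏ i : Fin (k+1), if (i : ℕ) < M then
          (((q (permExt j τ i)).1 : ℝ) : ℂ) else ν (q (permExt j τ i))) = 0 := by
        apply Finset.prod_eq_zero (Finset.mem_univ j)
        rw [if_pos (by omega), permExt_self]
        simp [hq, Fin.snoc_last]
      rw [hF]
      simp only [hzero, zero_mul]
  calc ∑ j : Fin (k+1), ∑ τ : Equiv.Perm (Fin k), F (permExt j τ)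
      = ∑ j : Fin (k+1), (if M ≤ (j : ℕ) then
          ν ((0 : NNReal), x) * ∑ τ : Equiv.Perm (Fin k), G τ else 0) :=
        Finset.sum_congr rfl (fun j _ => step2 j)
    _ = ((k + 1 - M : ℕ) : ℂ) * (ν ((0 : NNReal), x) * ∑ τ : Equiv.Perm (Fin k), G τ) :=
        sum_indicator _
    _ = ((k + 1 - M : ℕ) : ℂ) * ν ((0 : NNReal), x) * ∑ τ : Equiv.Perm (Fin k), G τ := by ring

end Main

lemma coef_identity (k M : ℕ) (hM : M ≤ k) :
    (16 * Real.pi) ^ M * Real.sqrt (((k+1).factorial : ℝ) / (M.factorial : ℝ))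
        / (((k + 1 - M).factorial : ℝ)) / (((k+1).factorial : ℝ)) * ((k + 1 - M : ℕ) : ℝ)
      = (1 / Real.sqrt ((k : ℝ) + 1)) *
        ((16 * Real.pi) ^ M * Real.sqrt ((k.factorial : ℝ) / (M.factorial : ℝ))
          / ((k - M).factorial : ℝ) / (k.factorial : ℝ)) := by
  have h1 : k + 1 - M = (k - M) + 1 := by omega
  have h2 : ((k+1).factorial : ℝ) = ((k : ℝ) + 1) * (k.factorial : ℝ) := by
    rw [Nat.factorial_succ]; push_cast; ring
  have h3 : Real.sqrt (((k+1).factorial : ℝ) / (M.factorial : ℝ))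
      = Real.sqrt ((k : ℝ) + 1) * Real.sqrt ((k.factorial : ℝ) / (M.factorial : ℝ)) := by
    rw [← Real.sqrt_mul (by positivity)]
    rw [h2]; ring_nf
  have hs : Real.sqrt ((k : ℝ) + 1) ≠ 0 := ne_of_gt (Real.sqrt_pos.mpr (by positivity))
  have hss : Real.sqrt ((k : ℝ) + 1) * Real.sqrt ((k : ℝ) + 1) = (k : ℝ) + 1 :=
    Real.mul_self_sqrt (by positivity)
  have hkf : (k.factorial : ℝ) ≠ 0 := Nat.cast_ne_zero.mpr k.factorial_ne_zero
  have hkmf : ((k - M).factorial : ℝ) ≠ 0 := Nat.cast_ne_zero.mpr (k - M).factorial_ne_zero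
  rw [h1, h3, h2, Nat.factorial_succ]
  push_cast
  have hd : ((k : ℝ) - (M : ℝ) + 1) ≠ 0 := by
    have : (M : ℝ) ≤ (k : ℝ) := by exact_mod_cast hM
    linarith
  have key : (1:ℝ) / Real.sqrt ((k : ℝ) + 1) = Real.sqrt ((k : ℝ) + 1) / ((k : ℝ) + 1) := by
    rw [div_eq_div_iff hs (by positivity)]
    linarith [hss]
  rw [key]
  field_simp

lemma coef_step (k M : ℕ) (hM : M ≤ k) (v S : ℂ) :
    (((16 * Real.pi) ^ M * Real.sqrt (((k+1).factorial : ℝ) / (M.factorial : ℝ))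
        / ((k + 1 - M).factorial : ℝ) / (((k+1).factorial : ℝ)) : ℝ) : ℂ) *
      (((k + 1 - M : ℕ) : ℂ) * v * S)
    = (((1 / Real.sqrt ((k : ℝ) + 1) : ℝ) : ℂ) * v) *
      ((((16 * Real.pi) ^ M * Real.sqrt ((k.factorial : ℝ) / (M.factorial : ℝ))
        / ((k - M).factorial : ℝ) / (k.factorial : ℝ) : ℝ) : ℂ) * S) := by
  have hco : (((16 * Real.pi) ^ M * Real.sqrt (((k+1).factorial : ℝ) / (M.factorial : ℝ))
        / ((k + 1 - M).factorial : ℝ) / (((k+1).factorial : ℝ) ) : ℝ) : ℂ)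
          * (((k + 1 - M : ℕ) : ℝ) : ℂ)
      = (((1 / Real.sqrt ((k : ℝ) + 1) : ℝ) : ℂ)) *
        (((16 * Real.pi) ^ M * Real.sqrt ((k.factorial : ℝ) / (M.factorial : ℝ))
          / ((k - M).factorial : ℝ) / (k.factorial : ℝ) : ℝ) : ℂ) := by
    rw [← Complex.ofReal_mul, ← Complex.ofReal_mul]
    exact congrArg Complex.ofReal (coef_identity k M hM)
  rw [← Complex.ofReal_natCast]
  linear_combination (v * S) * hco

lemma continuous_pairing {X : Type*} [TopologicalSpace X] (A : ℂ) (ν : Cplus X → ℂ)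
    (hν : Continuous ν) (ψ : ∀ m : ℕ, (Fin m → Cplus X) → ℂ)
    (hcont : ∀ m, Continuous (ψ m)) (n : ℕ) :
    Continuous (pairing A ν ψ n) := by
  unfold pairing
  refine continuous_const.mul (continuous_finset_sum _ fun m _ =>
    continuous_const.mul (continuous_finset_sum _ fun σ _ => Continuous.mul ?_ ?_))
  · refine continuous_finset_prod _ fun i _ => ?_
    by_cases h : (i : ℕ) < (m : ℕ)
    · simp only [if_pos h]
      exact Complex.continuous_ofReal.comp (NNReal.continuous_coe.comp
        (continuous_fst.comp (continuous_apply _)))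
    · simp only [if_neg h]
      exact hν.comp (continuous_apply _)
  · exact (hcont _).comp (continuous_pi fun i => continuous_apply _)

lemma continuous_snocmap {X : Type*} [TopologicalSpace X] (k : ℕ) (p : Fin k → Cplus X) (x : X) :
    Continuous (fun t : NNReal => (Fin.snoc p (t, x) : Fin (k+1) → Cplus X)) := by
  refine continuous_pi fun i => ?_
  induction i using Fin.lastCases with
  | last => simpa [Fin.snoc_last] using (continuous_id.prodMk continuous_const :
      Continuous fun t : NNReal => ((t, x) : Cplus X))
  | cast i => simpa [Fin.snoc_castSucc] using (continuous_const : Continuous fun _ : NNReal => p i)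

lemma pairing_snoc_zero {X : Type*} (A : ℂ) (ν : Cplus X → ℂ)
    (ψ : ∀ m : ℕ, (Fin m → Cplus X) → ℂ) (k : ℕ) (p : Fin k → Cplus X) (x : X) :
    pairing A ν ψ (k + 1) (Fin.snoc p ((0 : NNReal), x))
      = ((1 / Real.sqrt ((k : ℝ) + 1) : ℝ) : ℂ) * ν (0, x) * pairing A ν ψ k p := by
  unfold pairing
  rw [Fin.sum_univ_castSucc]
  have step : ∀ m : Fin (k+1),
      ((((16 * Real.pi) ^ (m : ℕ)
          * Real.sqrt (((k+1).factorial : ℝ) / ((m : ℕ).factorial : ℝ))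
          / ((k + 1 - (m : ℕ)).factorial : ℝ) / ((k+1).factorial : ℝ) : ℝ) : ℂ) *
        ∑ σ : Equiv.Perm (Fin (k+1)),
          (∏ i : Fin (k+1), if (i : ℕ) < (m : ℕ) then
              ((((Fin.snoc p ((0 : NNReal), x) : Fin (k+1) → Cplus X) (σ i)).1 : ℝ) : ℂ)
            else ν ((Fin.snoc p ((0 : NNReal), x) : Fin (k+1) → Cplus X) (σ i))) *
          ψ (m : ℕ) (fun i : Fin (m : ℕ) => (Fin.snoc p ((0 : NNReal), x) : Fin (k+1) → Cplus X)
            (σ (Fin.castLE (le_trans (Nat.lt_succ_iff.mp m.isLt) (Nat.le_succ k)) i))))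
      = ((((1 / Real.sqrt ((k : ℝ) + 1) : ℝ) : ℂ)) * ν ((0 : NNReal), x)) *
        ((((16 * Real.pi) ^ (m : ℕ)
            * Real.sqrt ((k.factorial : ℝ) / ((m : ℕ).factorial : ℝ))
            / ((k - (m : ℕ)).factorial : ℝ) / (k.factorial : ℝ) : ℝ) : ℂ) *
          ∑ τ : Equiv.Perm (Fin k),
            (∏ i : Fin k, if (i : ℕ) < (m : ℕ) then (((p (τ i)).1 : ℝ) : ℂ) else ν (p (τ i))) *
            ψ (m : ℕ) (fun i : Fin (m : ℕ) =>
              p (τ (Fin.castLE (Nat.lt_succ_iff.mp m.isLt) i)))) := by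
    intro m
    have hM : (m : ℕ) ≤ k := Nat.lt_succ_iff.mp m.isLt
    rw [BMSAux.sum_perm_snoc ν ψ k p x (le_trans hM (Nat.le_succ k)) hM]
    exact coef_step k (m : ℕ) hM _ _
  have hlast :
      ((((16 * Real.pi) ^ (k+1)
          * Real.sqrt (((k+1).factorial : ℝ) / ((k+1).factorial : ℝ))
          / ((k + 1 - (k+1)).factorial : ℝ) / ((k+1).factorial : ℝ) : ℝ) : ℂ) *
        ∑ σ : Equiv.Perm (Fin (k+1)),
          (∏ i : Fin (k+1), if (i : ℕ) < k + 1 then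
              ((((Fin.snoc p ((0 : NNReal), x) : Fin (k+1) → Cplus X) (σ i)).1 : ℝ) : ℂ)
            else ν ((Fin.snoc p ((0 : NNReal), x) : Fin (k+1) → Cplus X) (σ i))) *
          ψ (k+1) (fun i : Fin (k+1) => (Fin.snoc p ((0 : NNReal), x) : Fin (k+1) → Cplus X)
            (σ (Fin.castLE (le_refl (k+1)) i)))) = 0 :=
    mul_eq_zero_of_right _ (BMSAux.sum_perm_snoc_top ν ψ k p x)
  exact (congrArg (fun z => A * z)
      (congrArg₂ HAdd.hAdd (Finset.sum_congr rfl fun m _ => step m) hlast)).trans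
    (by rw [add_zero, ← Finset.mul_sum]; ring)

end BMSAux

/-- **Soft factorization** (computational core of the paper's Lemma):
for a continuous `ν` and a symmetric, continuous component family `ψ`, the
pairing with the BMS `(k+1)`-particle state factorizes as the frequency of the
last particle tends to `0⁺`:
`lim_{ω→0⁺} F_{k+1}[ψ](p₁,…,p_k,(ω,x̂)) = (1/√(k+1)) ν(0,x̂) F_k[ψ](p₁,…,p_k)`.
(Since `ν(0,x̂) = √(2/π)·Δ(x̂)`, this is the factor `√(2/(π n))·Δ(p̂ₙ)` with
`n = k+1 ≥ 1`.) -/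
theorem bms_soft_factorization
    {X : Type*} [TopologicalSpace X] (A : ℂ) (ν : Cplus X → ℂ) (hν : Continuous ν)
    (ψ : ∀ m : ℕ, (Fin m → Cplus X) → ℂ) (hsym : IsSymmFamily ψ)
    (hcont : ∀ m, Continuous (ψ m))
    (k : ℕ) (p : Fin k → Cplus X) (x : X) :
    Filter.Tendsto
      (fun t : NNReal => pairing A ν ψ (k + 1) (Fin.snoc p (t, x)))
      (nhdsWithin 0 (Set.Ioi 0))
      (nhds (((1 / Real.sqrt ((k : ℝ) + 1) : ℝ) : ℂ) * ν (0, x) * pairing A ν ψ k p)) := by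
  have hc : Continuous (fun t : NNReal => pairing A ν ψ (k + 1) (Fin.snoc p (t, x))) :=
    (BMSAux.continuous_pairing A ν hν ψ hcont (k + 1)).comp
      (BMSAux.continuous_snocmap k p x)
  have h0 := hc.tendsto 0
  rw [BMSAux.pairing_snoc_zero A ν ψ k p x] at h0
  exact h0.mono_left nhdsWithin_le_nhds

end
end

section
/- Let X be a topological space, C₊ := ℝ≥0 × X with the product topology, A ∈ ℂ, ν : C₊ → ℂ continuous with ν(0, x̂₀) ≠ 0 for some x̂₀ ∈ X, and let ψ = (ψₘ) be a component family with each ψₘ symmetric and continuous. If for some N ≥ 1 the pairing F_N[ψ] vanishes identically on C₊^N, then Fₙ[ψ] vanishes identically on C₊^n for every n ≤ N. (This is the computational core of the paper's Corollary: for nonzero memory, vanishing of the overlap with all BMS N-particle states forces vanishing of the overlaps with all BMS n-particle states for n < N.) -/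
/-!
Put a zero-frequency momentum `z = (0, x̂₀)` in front of `p`. In the summand of a permutation,
`z` contributes the factor `ω(z) = 0` when it sits among the first `m` slots and `ν(z)` otherwise,
which happens for `n + 1 - m` of its positions. Together with
`c(n+1, m) · (n + 1 - m) = c(n, m) / √(n+1)` for the numerical coefficients this gives
`F_{n+1}(z, p) = ν(z) / √(n+1) · F_n(p)`, so `ν(z) ≠ 0` lets the vanishing of `F_{n+1}`
descend to `F_n`, and descending induction from `N` concludes.
-/

open scoped BigOperators

noncomputable section

open Finset

def Fin.insertPerm {n : ℕ} (j : Fin (n + 1)) (τ : Equiv.Perm (Fin n)) :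
    Equiv.Perm (Fin (n + 1)) :=
  ((finSuccEquiv' j).trans (Equiv.optionCongr τ)).trans (finSuccEquiv n).symm

@[simp]
lemma Fin.insertPerm_self {n : ℕ} (j : Fin (n + 1)) (τ : Equiv.Perm (Fin n)) :
    j.insertPerm τ j = 0 := by
  simp [Fin.insertPerm]

@[simp]
lemma Fin.insertPerm_succAbove {n : ℕ} (j : Fin (n + 1)) (τ : Equiv.Perm (Fin n)) (k : Fin n) :
    j.insertPerm τ (j.succAbove k) = (τ k).succ := by
  simp [Fin.insertPerm]

lemma Fin.insertPerm_injective (n : ℕ) :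
    Function.Injective fun jτ : Fin (n + 1) × Equiv.Perm (Fin n) => jτ.1.insertPerm jτ.2 := by
  rintro ⟨j, τ⟩ ⟨j', τ'⟩ h
  simp only at h
  obtain rfl : j = j' :=
    (j'.insertPerm τ').injective (by rw [insertPerm_self, ← h, insertPerm_self])
  obtain rfl : τ = τ' := by
    ext k : 1
    simpa using congrArg (· (j.succAbove k)) h
  rfl

def Fin.insertPermEquiv (n : ℕ) :
    Fin (n + 1) × Equiv.Perm (Fin n) ≃ Equiv.Perm (Fin (n + 1)) :=
  Equiv.ofBijective _ ((Fintype.bijective_iff_injective_and_card _).mpr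
    ⟨Fin.insertPerm_injective n, by simp [Fintype.card_perm, Nat.factorial_succ]⟩)

lemma Fin.sum_perm_succ {M : Type*} [AddCommMonoid M] {n : ℕ}
    (f : Equiv.Perm (Fin (n + 1)) → M) :
    ∑ σ, f σ = ∑ j : Fin (n + 1), ∑ τ : Equiv.Perm (Fin n), f (j.insertPerm τ) := by
  rw [← Fintype.sum_prod_type']
  exact ((Fin.insertPermEquiv n).sum_comp f).symm

lemma Fin.cons_comp_insertPerm {α : Type*} {n : ℕ} (z : α) (p : Fin n → α) (j : Fin (n + 1))
    (τ : Equiv.Perm (Fin n)) :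
    Fin.cons z p ∘ j.insertPerm τ = j.insertNth z (p ∘ τ) := by
  funext i
  induction i using j.succAboveCases <;> simp

lemma Fin.card_filter_val_not_lt {n m : ℕ} : #{i : Fin n | ¬ (i : ℕ) < m} = n - m := by
  rw [filter_not, card_sdiff_of_subset (filter_subset _ _), Fin.card_filter_val_lt, card_univ,
    Fintype.card_fin]
  omega

def pairingCoeff (n m : ℕ) : ℝ :=
  (16 * Real.pi) ^ m * Real.sqrt ((n.factorial : ℝ) / (m.factorial : ℝ))
    / ((n - m).factorial : ℝ) / (n.factorial : ℝ)

lemma pairingCoeff_succ_mul {n m : ℕ} (hm : m ≤ n) :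
    pairingCoeff (n + 1) m * (n + 1 - m : ℕ) = (Real.sqrt (n + 1))⁻¹ * pairingCoeff n m := by
  have hfac : ((n + 1).factorial : ℝ) = (n + 1) * n.factorial := by
    push_cast [Nat.factorial_succ]; ring
  have hfac_sub : ((n + 1 - m).factorial : ℝ) = (n + 1 - m : ℕ) * (n - m).factorial := by
    rw [Nat.sub_add_comm hm, Nat.factorial_succ]; push_cast; ring
  have hsqrt : Real.sqrt (((n + 1).factorial : ℝ) / m.factorial)
      = Real.sqrt (n + 1) * Real.sqrt ((n.factorial : ℝ) / m.factorial) := by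
    rw [hfac, mul_div_assoc, Real.sqrt_mul (by positivity)]
  have hsub : ((n + 1 - m : ℕ) : ℝ) ≠ 0 := by
    rw [Nat.cast_ne_zero]; omega
  unfold pairingCoeff
  rw [hsqrt, hfac_sub, hfac]
  field_simp
  exact Real.sq_sqrt (by positivity)

section

variable {X : Type*} (ν : Cplus X → ℂ) (ψ : ∀ m : ℕ, (Fin m → Cplus X) → ℂ)

def pairingTerm {n : ℕ} (m : ℕ) (hm : m ≤ n) (q : Fin n → Cplus X) : ℂ :=
  (∏ i : Fin n, if (i : ℕ) < m then (((q i).1 : ℝ) : ℂ) else ν (q i)) *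
    ψ m (fun i => q (Fin.castLE hm i))

def symmPairingTerm {n : ℕ} (m : ℕ) (hm : m ≤ n) (p : Fin n → Cplus X) : ℂ :=
  ∑ σ : Equiv.Perm (Fin n), pairingTerm ν ψ m hm (p ∘ σ)

lemma pairing_eq_sum_symmPairingTerm (A : ℂ) (n : ℕ) (p : Fin n → Cplus X) :
    pairing A ν ψ n p =
      A * ∑ m : Fin (n + 1), (pairingCoeff n m : ℂ) * symmPairingTerm ν ψ m m.is_le p :=
  rfl

lemma pairingTerm_eq_zero_of_freq_eq_zero {n m : ℕ} (hm : m ≤ n) {q : Fin n → Cplus X}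
    {j : Fin n} (hj : (j : ℕ) < m) (hq : (q j).1 = 0) : pairingTerm ν ψ m hm q = 0 := by
  rw [pairingTerm, prod_eq_zero (mem_univ j) (by simp [hj, hq]), zero_mul]

lemma pairingTerm_insertNth {n m : ℕ} (hm : m ≤ n) (z : Cplus X) (r : Fin n → Cplus X)
    {j : Fin (n + 1)} (hj : m ≤ (j : ℕ)) :
    pairingTerm ν ψ m (hm.trans n.le_succ) (j.insertNth z r)
      = ν z * pairingTerm ν ψ m hm r := by
  have hsucc : ∀ k : Fin n, ((j.succAbove k : ℕ) < m ↔ (k : ℕ) < m) := by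
    intro k
    rcases j.castSucc_lt_or_lt_succ k with hk | hk
    · rw [Fin.succAbove_of_castSucc_lt _ _ hk, Fin.val_castSucc]
    · rw [Fin.succAbove_of_lt_succ _ _ hk, Fin.val_succ]
      rw [Fin.lt_def, Fin.val_succ] at hk
      omega
  have hcast : ∀ i : Fin m, (Fin.castLE (hm.trans n.le_succ) i : Fin (n + 1))
      = j.succAbove (Fin.castLE hm i) := by
    intro i
    have hlt : (Fin.castLE hm i).castSucc < j := by
      rw [Fin.lt_def, Fin.castSucc_castLE, Fin.val_castLE]
      omega
    rw [Fin.succAbove_of_castSucc_lt _ _ hlt]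
    rfl
  rw [pairingTerm, pairingTerm, Fin.prod_univ_succAbove _ j]
  simp only [Fin.insertNth_apply_same, Fin.insertNth_apply_succAbove, hsucc, hcast,
    not_lt.mpr hj, if_false]
  ring

lemma symmPairingTerm_cons {n m : ℕ} (hm : m ≤ n) {z : Cplus X} (hz : z.1 = 0)
    (p : Fin n → Cplus X) :
    symmPairingTerm ν ψ m (hm.trans n.le_succ) (Fin.cons z p)
      = (n + 1 - m : ℕ) * (ν z * symmPairingTerm ν ψ m hm p) := by
  have hj : ∀ j : Fin (n + 1), ∑ τ : Equiv.Perm (Fin n),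
      pairingTerm ν ψ m (hm.trans n.le_succ) (j.insertNth z (p ∘ τ))
        = if (j : ℕ) < m then 0 else ν z * symmPairingTerm ν ψ m hm p := by
    intro j
    split_ifs with hjm
    · exact sum_eq_zero fun τ _ ↦
        pairingTerm_eq_zero_of_freq_eq_zero ν ψ _ hjm (by rwa [Fin.insertNth_apply_same])
    · rw [symmPairingTerm, mul_sum]
      exact sum_congr rfl fun τ _ ↦ pairingTerm_insertNth ν ψ hm z _ (not_lt.mp hjm)
  simp only [symmPairingTerm, Fin.sum_perm_succ, Fin.cons_comp_insertPerm, hj]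
  rw [sum_ite, sum_const_zero, zero_add, sum_const, Fin.card_filter_val_not_lt, nsmul_eq_mul]

lemma symmPairingTerm_cons_top {n : ℕ} {z : Cplus X} (hz : z.1 = 0) (p : Fin n → Cplus X) :
    symmPairingTerm ν ψ (n + 1) le_rfl (Fin.cons z p) = 0 :=
  sum_eq_zero fun σ _ ↦ pairingTerm_eq_zero_of_freq_eq_zero ν ψ _ (σ⁻¹ 0).is_lt
    (by simpa using hz)

lemma pairing_cons_of_freq_eq_zero (A : ℂ) {n : ℕ} {z : Cplus X} (hz : z.1 = 0)
    (p : Fin n → Cplus X) :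
    pairing A ν ψ (n + 1) (Fin.cons z p)
      = ν z * (Real.sqrt (n + 1) : ℂ)⁻¹ * pairing A ν ψ n p := by
  have hterm : ∀ m : Fin (n + 1),
      (pairingCoeff (n + 1) m : ℂ) *
          symmPairingTerm ν ψ m (m.is_le.trans n.le_succ) (Fin.cons z p)
        = ν z * (Real.sqrt (n + 1) : ℂ)⁻¹ *
          ((pairingCoeff n m : ℂ) * symmPairingTerm ν ψ m m.is_le p) := by
    intro m
    have hcoeff := congrArg (fun x : ℝ ↦ (x : ℂ)) (pairingCoeff_succ_mul m.is_le)
    push_cast at hcoeff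
    rw [symmPairingTerm_cons ν ψ m.is_le hz]
    linear_combination (ν z * symmPairingTerm ν ψ m m.is_le p) * hcoeff
  rw [pairing_eq_sum_symmPairingTerm, pairing_eq_sum_symmPairingTerm, Fin.sum_univ_castSucc]
  simp only [Fin.val_castSucc, Fin.val_last]
  rw [symmPairingTerm_cons_top ν ψ hz, mul_zero, add_zero, sum_congr rfl fun m _ ↦ hterm m,
    ← mul_sum]
  ring

end

theorem bms_vanishing_descends_general
    {X : Type*} (A : ℂ) (ν : Cplus X → ℂ)
    (x₀ : X) (hx₀ : ν (0, x₀) ≠ 0)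
    (ψ : ∀ m : ℕ, (Fin m → Cplus X) → ℂ)
    (N : ℕ)
    (hvanish : ∀ p : Fin N → Cplus X, pairing A ν ψ N p = 0) :
    ∀ n ≤ N, ∀ p : Fin n → Cplus X, pairing A ν ψ n p = 0 := by
  intro n hn
  induction hn using Nat.decreasingInduction with
  | self => exact hvanish
  | of_succ n _ ih =>
    intro p
    have hsqrt : (Real.sqrt (n + 1) : ℂ)⁻¹ ≠ 0 :=
      inv_ne_zero (Complex.ofReal_ne_zero.mpr (Real.sqrt_ne_zero'.mpr n.cast_add_one_pos))
    have hcons := pairing_cons_of_freq_eq_zero ν ψ A (z := (0, x₀)) rfl p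
    rw [ih] at hcons
    exact (mul_eq_zero.mp hcons.symm).resolve_left (mul_ne_zero hx₀ hsqrt)

/-- **Corollary (computational core)**: for nonzero memory (`ν(0,x̂₀) ≠ 0` for
some direction `x̂₀`), if the pairing with all BMS `N`-particle states vanishes
identically for some `N ≥ 1`, then the pairing with all BMS `n`-particle states
vanishes identically for every `n ≤ N`. -/
theorem bms_vanishing_descends
    {X : Type*} [TopologicalSpace X] (A : ℂ) (ν : Cplus X → ℂ) (hν : Continuous ν)
    (x₀ : X) (hx₀ : ν (0, x₀) ≠ 0)
    (ψ : ∀ m : ℕ, (Fin m → Cplus X) → ℂ) (hsym : IsSymmFamily ψ)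
    (hcont : ∀ m, Continuous (ψ m))
    (N : ℕ) (hN : 1 ≤ N)
    (hvanish : ∀ p : Fin N → Cplus X, pairing A ν ψ N p = 0) :
    ∀ n ≤ N, ∀ p : Fin n → Cplus X, pairing A ν ψ n p = 0 :=
  bms_vanishing_descends_general A ν x₀ hx₀ ψ N hvanish

end
end

section
/- Fix ω > 0 and z₀ ∈ ℂ, and let G(z) := (ω/(4π)) · ((conj z − conj z₀)/(z − z₀)) · (1 + z₀·conj z)² / ((1+|z|²)(1+|z₀|²)) for z ≠ z₀. Then for every z ∈ ℂ with z ≠ z₀, P(z)² · ∂̄( w ↦ P(w)² · ∂̄( v ↦ P(v)^{-2} G(v) )(w) )(z) = −(ω/(8π)) · (1 + 3 · ⟨n(z), n(z₀)⟩), where ⟨·,·⟩ is the Euclidean inner product on ℝ³. (This says the paper's gravitational memory solution (4.10) satisfies the Green's function equation P²∂̄(P²∂̄(P⁻²Δ)) = (ω/2)·δ_{S²}|_{ℓ≥2} away from the source point: away from z₀ it equals minus ω/2 times the kernel (1/4π)(1+3cos γ) of the projection onto ℓ = 0,1 spherical harmonics.) -/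
open scoped BigOperators

noncomputable section

/-- The Wirtinger derivative `∂̄f(z) = (1/2)(∂f/∂x + i ∂f/∂y)`. -/
def dbar (f : ℂ → ℂ) (z : ℂ) : ℂ :=
  (1 / 2) * (deriv (fun t : ℝ => f (z + (t : ℂ))) 0
    + Complex.I * deriv (fun t : ℝ => f (z + (t : ℂ) * Complex.I)) 0)

/-- The conformal factor `P(z) = (1 + |z|²)/√2` of the round sphere metric in
stereographic coordinates. -/
def Pconf (z : ℂ) : ℝ := (1 + ‖z‖ ^ 2) / Real.sqrt 2

/-- The paper's gravitational memory Green's function (4.10):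
`G(z) = (ω/4π) ((z̄ − z̄₀)/(z − z₀)) (1 + z₀ z̄)² / ((1+|z|²)(1+|z₀|²))`. -/
def memG (ω : ℝ) (z₀ z : ℂ) : ℂ :=
  ((ω / (4 * Real.pi) : ℝ) : ℂ) *
    (((starRingEnd ℂ) z - (starRingEnd ℂ) z₀) / (z - z₀)) *
    (1 + z₀ * (starRingEnd ℂ) z) ^ 2 /
    (((1 + ‖z‖ ^ 2 : ℝ) : ℂ) * ((1 + ‖z₀‖ ^ 2 : ℝ) : ℂ))

/-- The unit direction vector `n(z) = (z + z̄, −i(z − z̄), 1 − |z|²)/(1 + |z|²) ∈ ℝ³`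
of the stereographic coordinate `z`. -/
def nvec (z : ℂ) : Fin 3 → ℝ :=
  ![(2 * z.re) / (1 + ‖z‖ ^ 2),
    (2 * z.im) / (1 + ‖z‖ ^ 2),
    (1 - ‖z‖ ^ 2) / (1 + ‖z‖ ^ 2)]

/-- Euclidean inner product on `ℝ³`. -/
def dot3 (u v : Fin 3 → ℝ) : ℝ := ∑ i, u i * v i

/-! Write a function of `v` as `F(v, v̄)` with `F` holomorphic in two variables; then `∂̄` is the
partial derivative `∂F/∂u` at `u = v̄`. Both `P⁻²G` and `P²∂̄(P⁻²G)` are rational in `(v, v̄)`,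
so the two Wirtinger derivatives become one-variable complex derivatives. In the second one the
pole factor `v - z₀` cancels, and what remains is `-(ω/8π)(1 + 3⟨n(z), n(z₀)⟩)` written in the
coordinates `(z, z̄, z₀, z̄₀)`. -/

open ComplexConjugate Real

theorem Filter.EventuallyEq.dbar_eq {f g : ℂ → ℂ} {z : ℂ} (h : f =ᶠ[nhds z] g) :
    dbar f z = dbar g z := by
  have line (d : ℂ) : (fun t : ℝ => f (z + t * d)) =ᶠ[nhds 0] fun t : ℝ => g (z + t * d) :=
    (Continuous.tendsto' (by fun_prop) 0 z (by simp)).eventually h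
  simpa only [dbar, mul_one] using congrArg₂ (fun a b => (1 / 2 : ℂ) * (a + Complex.I * b))
    (line 1).deriv_eq (line Complex.I).deriv_eq

theorem dbar_eq_deriv_conj {F : ℂ → ℂ → ℂ} {z : ℂ}
    (hF : DifferentiableAt ℂ (Function.uncurry F) (z, conj z)) :
    dbar (fun v => F v (conj v)) z = deriv (F z) (conj z) := by
  set L := fderiv ℂ (Function.uncurry F) (z, conj z)
  have line (d : ℂ) :
      deriv (fun t : ℝ => F (z + t * d) (conj (z + t * d))) 0 = L (d, conj d) := by
    have hγ : HasDerivAt (fun t : ℝ => (z + t * d, conj z + t * conj d)) (d, conj d) 0 := by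
      have hx := ((hasDerivAt_id (0 : ℝ)).ofReal_comp.mul_const d).const_add z
      have hy := ((hasDerivAt_id (0 : ℝ)).ofReal_comp.mul_const (conj d)).const_add (conj z)
      simpa using hx.prodMk hy
    have := (hF.hasFDerivAt.restrictScalars ℝ).comp_hasDerivAt_of_eq 0 hγ (by simp)
    simpa [Function.comp_def] using this.deriv
  have hpartial : deriv (F z) (conj z) = L (0, 1) :=
    (hF.hasFDerivAt.comp_hasDerivAt (conj z)
      ((hasDerivAt_const _ z).prodMk (hasDerivAt_id _))).deriv
  have hsplit (d : ℂ) : L (d, conj d) = d * L (1, 0) + conj d * L (0, 1) := by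
    rw [show (d, conj d) = d • ((1 : ℂ), (0 : ℂ)) + conj d • ((0 : ℂ), (1 : ℂ)) by ext <;> simp,
      map_add, map_smul, map_smul, smul_eq_mul, smul_eq_mul]
  have h1 := line 1
  simp only [mul_one] at h1
  rw [dbar, h1, line, hsplit, hsplit, hpartial, map_one, Complex.conj_I]
  linear_combination (L (1, 0) - L (0, 1)) / 2 * Complex.I_sq

theorem ofReal_one_add_norm_sq (v : ℂ) : ((1 + ‖v‖ ^ 2 : ℝ) : ℂ) = 1 + v * conj v := by
  push_cast; rw [Complex.mul_conj']

theorem one_add_mul_conj_ne_zero (v : ℂ) : 1 + v * conj v ≠ 0 := by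
  rw [← ofReal_one_add_norm_sq, Complex.ofReal_ne_zero]; positivity

theorem Pconf_sq (v : ℂ) : ((Pconf v : ℝ) : ℂ) ^ 2 = (1 + v * conj v) ^ 2 / 2 := by
  rw [Pconf, Complex.ofReal_div, div_pow, ofReal_one_add_norm_sq, ← Complex.ofReal_pow,
    Real.sq_sqrt zero_le_two, Complex.ofReal_ofNat]

/- `memPhi ω z₀ v v̄ = P(v)⁻² G(v)` and `memPsi ω z₀ v v̄ = P(v)² ∂̄(P⁻²G)(v)`, with the
antiholomorphic variable `v̄` freed to an independent argument `u`. -/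
def memPhi (ω : ℝ) (z₀ v u : ℂ) : ℂ :=
  ω / (2 * π * (1 + z₀ * conj z₀)) * ((u - conj z₀) / (v - z₀)) * (1 + z₀ * u) ^ 2 /
    (1 + v * u) ^ 3

def memPsi (ω : ℝ) (z₀ v u : ℂ) : ℂ :=
  ω / (4 * π * (1 + z₀ * conj z₀)) * (1 + z₀ * u) *
    (1 - 2 * v * u + 3 * z₀ * u + 3 * conj z₀ * v - 2 * z₀ * conj z₀ + z₀ * conj z₀ * v * u) /
    ((v - z₀) * (1 + v * u) ^ 2)

theorem inv_Pconf_sq_mul_memG (ω : ℝ) (z₀ v : ℂ) :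
    (((Pconf v : ℝ) : ℂ) ^ 2)⁻¹ * memG ω z₀ v = memPhi ω z₀ v (conj v) := by
  have := one_add_mul_conj_ne_zero v
  have := one_add_mul_conj_ne_zero z₀
  rw [Pconf_sq, memG, memPhi, ofReal_one_add_norm_sq, ofReal_one_add_norm_sq]
  push_cast
  field_simp
  ring

theorem differentiableAt_uncurry_memPhi (ω : ℝ) {z₀ v u : ℂ} (hv : v ≠ z₀)
    (hvu : 1 + v * u ≠ 0) :
    DifferentiableAt ℂ (Function.uncurry (memPhi ω z₀)) (v, u) := by
  have := sub_ne_zero.2 hv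
  unfold memPhi Function.uncurry
  fun_prop (disch := simp [*])

theorem differentiableAt_uncurry_memPsi (ω : ℝ) {z₀ v u : ℂ} (hv : v ≠ z₀)
    (hvu : 1 + v * u ≠ 0) :
    DifferentiableAt ℂ (Function.uncurry (memPsi ω z₀)) (v, u) := by
  have := sub_ne_zero.2 hv
  unfold memPsi Function.uncurry
  fun_prop (disch := simp [*])

theorem deriv_memPhi (ω : ℝ) {z₀ v u : ℂ} (hv : v ≠ z₀) (hvu : 1 + v * u ≠ 0) :
    deriv (memPhi ω z₀ v) u = 2 * memPsi ω z₀ v u / (1 + v * u) ^ 2 := by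
  have hv' := sub_ne_zero.2 hv
  have h : HasDerivAt (memPhi ω z₀ v) _ u :=
    (((((hasDerivAt_id u).sub_const (conj z₀)).div_const (v - z₀)).const_mul
      (ω / (2 * π * (1 + z₀ * conj z₀)) : ℂ)).fun_mul
      ((((hasDerivAt_id u).const_mul z₀).const_add 1).fun_pow 2)).fun_div
      ((((hasDerivAt_id u).const_mul v).const_add 1).fun_pow 3) (pow_ne_zero 3 hvu)
  have := one_add_mul_conj_ne_zero z₀
  rw [h.deriv, memPsi, id]
  field_simp
  ring

theorem deriv_memPsi (ω : ℝ) {z₀ v u : ℂ} (hv : v ≠ z₀) (hvu : 1 + v * u ≠ 0) :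
    deriv (memPsi ω z₀ v) u = -(ω / (4 * π * (1 + z₀ * conj z₀))) *
      (4 - 2 * v * u - 2 * z₀ * conj z₀ + 4 * v * u * z₀ * conj z₀ + 6 * conj z₀ * v
        + 6 * z₀ * u) / (1 + v * u) ^ 3 := by
  have hv' := sub_ne_zero.2 hv
  have hN : HasDerivAt (fun u => 1 - 2 * v * u + 3 * z₀ * u + 3 * conj z₀ * v - 2 * z₀ * conj z₀
      + z₀ * conj z₀ * v * u) (-2 * v + 3 * z₀ + z₀ * conj z₀ * v) u := by
    refine ((hasDerivAt_mul_const (-2 * v + 3 * z₀ + z₀ * conj z₀ * v)).const_add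
      (1 + 3 * conj z₀ * v - 2 * z₀ * conj z₀)).congr_of_eventuallyEq (.of_forall fun x => ?_)
    ring
  have h : HasDerivAt (memPsi ω z₀ v) _ u :=
    (((((hasDerivAt_id u).const_mul z₀).const_add 1).const_mul
      (ω / (4 * π * (1 + z₀ * conj z₀)) : ℂ)).fun_mul hN).fun_div
      (((((hasDerivAt_id u).const_mul v).const_add 1).fun_pow 2).const_mul (v - z₀))
      (mul_ne_zero hv' (pow_ne_zero 2 hvu))
  have := one_add_mul_conj_ne_zero z₀
  rw [h.deriv, id]
  field_simp
  ring

theorem Pconf_sq_mul_dbar_memPhi (ω : ℝ) {z₀ w : ℂ} (hw : w ≠ z₀) :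
    ((Pconf w : ℝ) : ℂ) ^ 2 * dbar (fun v => memPhi ω z₀ v (conj v)) w =
      memPsi ω z₀ w (conj w) := by
  have hA := one_add_mul_conj_ne_zero w
  rw [dbar_eq_deriv_conj (differentiableAt_uncurry_memPhi ω hw hA), deriv_memPhi ω hw hA,
    Pconf_sq]
  field_simp

theorem ofReal_dot3_nvec (z w : ℂ) :
    ((dot3 (nvec z) (nvec w) : ℝ) : ℂ) =
      (2 * (z * conj w + conj z * w) + (1 - z * conj z) * (1 - w * conj w)) /
        ((1 + z * conj z) * (1 + w * conj w)) := by
  have := one_add_mul_conj_ne_zero z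
  have := one_add_mul_conj_ne_zero w
  simp only [dot3, nvec, Fin.sum_univ_three, Matrix.cons_val_zero, Matrix.cons_val_one,
    Matrix.cons_val_two, Matrix.head_cons, Matrix.tail_cons]
  push_cast
  rw [Complex.re_eq_add_conj, Complex.re_eq_add_conj, Complex.im_eq_sub_conj,
    Complex.im_eq_sub_conj, ← Complex.mul_conj', ← Complex.mul_conj']
  field_simp
  linear_combination (z - conj z) * (w - conj w) * Complex.I_sq

theorem memG_greens_equation_away_from_source_general
    (ω : ℝ) (z₀ : ℂ) (z : ℂ) (hz : z ≠ z₀) :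
    ((Pconf z : ℝ) : ℂ) ^ 2 *
      dbar (fun w => ((Pconf w : ℝ) : ℂ) ^ 2 *
        dbar (fun v => (((Pconf v : ℝ) : ℂ) ^ 2)⁻¹ * memG ω z₀ v) w) z
    = -((ω / (8 * Real.pi) : ℝ) : ℂ) *
        (1 + 3 * ((dot3 (nvec z) (nvec z₀) : ℝ) : ℂ)) := by
  have hΨ : (fun w => ((Pconf w : ℝ) : ℂ) ^ 2 *
      dbar (fun v => (((Pconf v : ℝ) : ℂ) ^ 2)⁻¹ * memG ω z₀ v) w) =ᶠ[nhds z]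
      fun w => memPsi ω z₀ w (conj w) := by
    filter_upwards [eventually_ne_nhds hz] with w hw
    simp only [inv_Pconf_sq_mul_memG]
    exact Pconf_sq_mul_dbar_memPhi ω hw
  have hA := one_add_mul_conj_ne_zero z
  have hA₀ := one_add_mul_conj_ne_zero z₀
  rw [hΨ.dbar_eq, dbar_eq_deriv_conj (differentiableAt_uncurry_memPsi ω hz hA),
    deriv_memPsi ω hz hA, Pconf_sq, ofReal_dot3_nvec]
  push_cast
  field_simp
  ring

/-- The gravitational memory solution (4.10) satisfies the Green's function
equation `P²∂̄(P²∂̄(P⁻²Δ)) = (ω/2) δ_{S²}|_{ℓ≥2}` away from the source point: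
for `z ≠ z₀`,
`P(z)² ∂̄(w ↦ P(w)² ∂̄(v ↦ P(v)⁻² G(v))(w))(z) = −(ω/8π)(1 + 3⟨n(z), n(z₀)⟩)`. -/
theorem memG_greens_equation_away_from_source
    (ω : ℝ) (hω : 0 < ω) (z₀ : ℂ) (z : ℂ) (hz : z ≠ z₀) :
    ((Pconf z : ℝ) : ℂ) ^ 2 *
      dbar (fun w => ((Pconf w : ℝ) : ℂ) ^ 2 *
        dbar (fun v => (((Pconf v : ℝ) : ℂ) ^ 2)⁻¹ * memG ω z₀ v) w) z
    = -((ω / (8 * Real.pi) : ℝ) : ℂ) *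
        (1 + 3 * ((dot3 (nvec z) (nvec z₀) : ℝ) : ℂ)) :=
  memG_greens_equation_away_from_source_general ω z₀ z hz

end
end

section
/- Fix ω > 0 and z₀ ∈ ℂ, and let G(z) := (ω/(4π)) · ((conj z − conj z₀)/(z − z₀)) · (1 + z₀·conj z)² / ((1+|z|²)(1+|z₀|²)) for z ≠ z₀. Then |G(z)| ≤ ω/(4π) for every z ≠ z₀. (This is the paper's claim, correcting an earlier erroneous statement, that the absolute value of the memory solution (4.10) remains O(1) everywhere, including as z → z₀.) -/
noncomputable section

/-!
The factor `(z̄ - z̄₀)/(z - z₀)` has modulus one (and is `0` at `z = z₀`, by the convention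
`x / 0 = 0`). The remaining factor is controlled by the identity
`|1 + a b̄|² + |a - b|² = (1 + |a|²)(1 + |b|²)`: the ratio `|1 + z₀ z̄|² / ((1+|z|²)(1+|z₀|²))`
is `cos² (θ/2)`, where `θ` is the angle between the directions with stereographic
coordinates `z` and `z₀`, hence at most one.
-/

open ComplexConjugate

namespace Complex

lemma norm_conj_div_self_le_one (w : ℂ) : ‖conj w / w‖ ≤ 1 := by
  rw [norm_div, norm_conj]
  exact div_self_le_one _

lemma normSq_one_add_mul_conj_add_normSq_sub (a b : ℂ) :
    normSq (1 + a * conj b) + normSq (a - b) = (1 + normSq a) * (1 + normSq b) := by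
  simp only [normSq_apply, add_re, add_im, mul_re, mul_im, sub_re, sub_im, conj_re, conj_im,
    one_re, one_im]
  ring

lemma norm_one_add_mul_conj_sq_le (a b : ℂ) :
    ‖1 + a * conj b‖ ^ 2 ≤ (1 + ‖b‖ ^ 2) * (1 + ‖a‖ ^ 2) := by
  have h := normSq_one_add_mul_conj_add_normSq_sub a b
  simp only [← Complex.sq_norm] at h
  linarith [sq_nonneg ‖a - b‖]

end Complex

theorem memG_bounded_general (ω : ℝ) (hω : 0 < ω) (z₀ : ℂ) (z : ℂ) :
    ‖memG ω z₀ z‖ ≤ ω / (4 * Real.pi) := by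
  have hc : 0 ≤ ω / (4 * Real.pi) := by positivity
  have hphase : ‖(conj z - conj z₀) / (z - z₀)‖ ≤ 1 := by
    rw [← map_sub]
    exact Complex.norm_conj_div_self_le_one _
  have hratio : ‖1 + z₀ * conj z‖ ^ 2 / ((1 + ‖z‖ ^ 2) * (1 + ‖z₀‖ ^ 2)) ≤ 1 :=
    div_le_one_of_le₀ (Complex.norm_one_add_mul_conj_sq_le z₀ z) (by positivity)
  calc ‖memG ω z₀ z‖
      = ω / (4 * Real.pi) * ‖(conj z - conj z₀) / (z - z₀)‖ *
          (‖1 + z₀ * conj z‖ ^ 2 / ((1 + ‖z‖ ^ 2) * (1 + ‖z₀‖ ^ 2))) := by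
        rw [memG, norm_div, norm_mul, norm_mul, norm_mul, norm_pow, Complex.norm_real,
          Complex.norm_real, Complex.norm_real, Real.norm_of_nonneg hc,
          Real.norm_of_nonneg (by positivity), Real.norm_of_nonneg (by positivity), mul_div_assoc]
    _ ≤ ω / (4 * Real.pi) * 1 * 1 := by gcongr
    _ = ω / (4 * Real.pi) := by ring

/-- The gravitational memory solution (4.10) is bounded: `|G(z)| ≤ ω/(4π)` for
all `z ≠ z₀` — its absolute value stays `O(1)` even as `z → z₀`. -/
theorem memG_bounded (ω : ℝ) (hω : 0 < ω) (z₀ : ℂ) (z : ℂ) (hz : z ≠ z₀) :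
    ‖memG ω z₀ z‖ ≤ ω / (4 * Real.pi) :=
  memG_bounded_general ω hω z₀ z

end
end
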